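/- arXiv:1912.07303 — 7 statements merged into one kernel-verified Lean document; each statement's English description precedes it below -/
import Mathlib

section
/- Let α ∈ (1,2). There exists a constant c > 0, depending only on α, such that for all integers n₁, n₂, n₃, n with n₁ − n₂ + n₃ − n = 0, n₂ ≠ n₁ and n₂ ≠ n₃, the resonance function Φ := |n₁|^α − |n₂|^α + |n₃|^α − |n|^α is nonzero and satisfies |Φ| ≥ c · |n₁ − n₂| · |n₂ − n₃| · (max(|n₁|,|n₂|,|n₃|,|n|))^{α−2}. -/
/-!
The resonance function is a second difference of `f t = |t| ^ α`: with `x = n₂`, `a = n₁ - n₂` and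
`b = n₃ - n₂` one has `Φ = -(f (x + a + b) - f (x + a) - f (x + b) + f x)`. The derivative
`f' t = α |t| ^ (α - 2) t` has slope `α (α - 1) |t| ^ (α - 2) ≥ α (α - 1) M ^ (α - 2)` on `[-M, M]`,
so the second difference is at least `α (α - 1) |a| |b| M ^ (α - 2)` in absolute value.
Since `f'` is not differentiable at `0`, its growth is proved on `[0, M]` by the mean value theorem
and transported to `[-M, 0]` by oddness.
-/

open Real Set

noncomputable def resonance (α p₁ p₂ p₃ p₄ : ℝ) : ℝ := |p₁| ^ α - |p₂| ^ α + |p₃| ^ α - |p₄| ^ α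

section

variable {α M : ℝ}

theorem monotoneOn_rpow_sub_mul (hα₁ : 1 < α) (hα₂ : α ≤ 2) :
    MonotoneOn (fun t => t ^ (α - 1) - (α - 1) * M ^ (α - 2) * t) (Icc 0 M) := by
  have hderiv : ∀ t, 0 < t → HasDerivAt (fun t => t ^ (α - 1) - (α - 1) * M ^ (α - 2) * t)
      ((α - 1) * t ^ (α - 2) - (α - 1) * M ^ (α - 2)) t := fun t ht => by
    refine ((hasDerivAt_rpow_const (Or.inl ht.ne')).sub
      ((hasDerivAt_id' t).const_mul _)).congr_deriv ?_
    rw [show α - 1 - 1 = α - 2 by ring, mul_one]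
  refine monotoneOn_of_deriv_nonneg (convex_Icc 0 M) ?_ ?_ ?_
  · exact ((continuous_rpow_const (by linarith)).sub (continuous_const_mul _)).continuousOn
  · rw [interior_Icc]
    exact fun t ht => (hderiv t ht.1).differentiableAt.differentiableWithinAt
  · rw [interior_Icc]
    intro t ht
    rw [(hderiv t ht.1).deriv, ← mul_sub]
    exact mul_nonneg (by linarith)
      (sub_nonneg.2 (rpow_le_rpow_of_nonpos ht.1 ht.2.le (by linarith)))

theorem monotoneOn_abs_rpow_mul_sub (hα₁ : 1 < α) (hα₂ : α ≤ 2) (hM : 0 ≤ M) :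
    MonotoneOn (fun t => |t| ^ (α - 2) * t - (α - 1) * M ^ (α - 2) * t) (Icc (-M) M) := by
  set φ := fun t : ℝ => |t| ^ (α - 2) * t - (α - 1) * M ^ (α - 2) * t
  have hodd : ∀ t, φ (-t) = -φ t := fun t => by simp only [φ, abs_neg]; ring
  have hnonneg : MonotoneOn φ (Icc 0 M) := by
    refine (monotoneOn_rpow_sub_mul hα₁ hα₂).congr fun t ht => ?_
    rcases ht.1.eq_or_lt with rfl | ht₀
    · simp [φ, zero_rpow (by linarith : α - 1 ≠ 0)]
    · simp only [φ, abs_of_pos ht₀, ← rpow_add_one ht₀.ne']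
      ring_nf
  have hnonpos : MonotoneOn φ (Icc (-M) 0) := fun x hx y hy hxy => by
    have := hnonneg ⟨neg_nonneg.2 hy.2, neg_le.1 hy.1⟩ ⟨neg_nonneg.2 hx.2, neg_le.1 hx.1⟩
      (neg_le_neg hxy)
    rw [hodd, hodd] at this
    linarith
  rw [← Icc_union_Icc_eq_Icc (neg_nonpos.2 hM) hM]
  exact hnonpos.union_right hnonneg (isGreatest_Icc (neg_nonpos.2 hM)) (isLeast_Icc hM)

theorem monotoneOn_abs_rpow_add_sub {b : ℝ} (hα₁ : 1 < α) (hα₂ : α ≤ 2) (hb : 0 ≤ b) :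
    MonotoneOn (fun t => |t + b| ^ α - |t| ^ α - α * (α - 1) * M ^ (α - 2) * b * t)
      (Icc (-M) (M - b)) := by
  have hderiv : ∀ t, HasDerivAt (fun t => |t + b| ^ α - |t| ^ α - α * (α - 1) * M ^ (α - 2) * b * t)
      (α * |t + b| ^ (α - 2) * (t + b) - α * |t| ^ (α - 2) * t - α * (α - 1) * M ^ (α - 2) * b) t :=
    fun t => by
      refine ((((hasDerivAt_abs_rpow (t + b) hα₁).comp t ((hasDerivAt_id' t).add_const b)).sub
        (hasDerivAt_abs_rpow t hα₁)).sub ((hasDerivAt_id' t).const_mul _)).congr_deriv ?_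
      ring
  refine monotoneOn_of_deriv_nonneg (convex_Icc _ _)
    (HasDerivAt.continuousOn fun t _ => hderiv t)
    (fun t _ => (hderiv t).differentiableAt.differentiableWithinAt) fun t ht => ?_
  rw [interior_Icc] at ht
  have hφ := monotoneOn_abs_rpow_mul_sub hα₁ hα₂ (by linarith [ht.1, ht.2])
    ⟨ht.1.le, by linarith [ht.2]⟩ ⟨by linarith [ht.1], by linarith [ht.2]⟩
    (le_add_of_nonneg_right hb)
  rw [(hderiv t).deriv]
  nlinarith [mul_le_mul_of_nonneg_left hφ (by linarith : (0 : ℝ) ≤ α)]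

theorem le_abs_rpow_add_abs_rpow_sub_abs_rpow_sub_abs_rpow {u v w z : ℝ} (hα₁ : 1 < α)
    (hα₂ : α ≤ 2) (huv : u ≤ v) (huw : u ≤ w) (hsum : u + z = v + w) (hu : -M ≤ u)
    (hz : z ≤ M) :
    α * (α - 1) * (v - u) * (w - u) * M ^ (α - 2) ≤ |u| ^ α + |z| ^ α - |v| ^ α - |w| ^ α := by
  have h := monotoneOn_abs_rpow_add_sub (M := M) (b := w - u) hα₁ hα₂ (sub_nonneg.2 huw)
    ⟨hu, by linarith⟩ ⟨by linarith, by linarith⟩ huv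
  simp only [add_sub_cancel, show v + (w - u) = z by linarith] at h
  linarith

theorem mul_abs_sub_mul_abs_sub_le_abs_resonance {p₁ p₂ p₃ p₄ : ℝ} (hα₁ : 1 < α)
    (hα₂ : α ≤ 2) (hsum : p₁ - p₂ + p₃ - p₄ = 0) (h₁ : |p₁| ≤ M) (h₂ : |p₂| ≤ M)
    (h₃ : |p₃| ≤ M) (h₄ : |p₄| ≤ M) :
    α * (α - 1) * |p₁ - p₂| * |p₂ - p₃| * M ^ (α - 2) ≤ |resonance α p₁ p₂ p₃ p₄| := by
  obtain rfl : p₄ = p₁ - p₂ + p₃ := by linarith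
  rw [abs_le] at h₁ h₂ h₃ h₄
  have hle := le_abs_self (resonance α p₁ p₂ p₃ (p₁ - p₂ + p₃))
  have hge := neg_abs_le (resonance α p₁ p₂ p₃ (p₁ - p₂ + p₃))
  unfold resonance at hle hge ⊢
  -- in each case the four-point inequality is applied with the smallest point as base point
  rcases le_total p₂ p₁ with h₂₁ | h₁₂ <;> rcases le_total p₂ p₃ with h₂₃ | h₃₂
  · have := le_abs_rpow_add_abs_rpow_sub_abs_rpow_sub_abs_rpow hα₁ hα₂ h₂₁ h₂₃ (by ring) h₂.1 h₄.2
    rw [abs_of_nonneg (sub_nonneg.2 h₂₁), abs_of_nonpos (sub_nonpos.2 h₂₃)]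
    linarith
  · have := le_abs_rpow_add_abs_rpow_sub_abs_rpow_sub_abs_rpow (w := p₁ - p₂ + p₃) hα₁ hα₂ h₃₂
      (by linarith) (by ring) h₃.1 h₁.2
    rw [abs_of_nonneg (sub_nonneg.2 h₂₁), abs_of_nonneg (sub_nonneg.2 h₃₂)]
    linarith
  · have := le_abs_rpow_add_abs_rpow_sub_abs_rpow_sub_abs_rpow (w := p₁ - p₂ + p₃) hα₁ hα₂ h₁₂
      (by linarith) (by ring) h₁.1 h₃.2
    rw [abs_of_nonpos (sub_nonpos.2 h₁₂), abs_of_nonpos (sub_nonpos.2 h₂₃)]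
    linarith
  · have := le_abs_rpow_add_abs_rpow_sub_abs_rpow_sub_abs_rpow (u := p₁ - p₂ + p₃) (v := p₃)
      (w := p₁) hα₁ hα₂ (by linarith) (by linarith) (by ring) h₄.1 h₂.2
    rw [abs_of_nonpos (sub_nonpos.2 h₁₂), abs_of_nonneg (sub_nonneg.2 h₃₂)]
    linarith

end

/-- Resonance function lower bound for the fractional NLS. -/
theorem resonance_lower_bound (α : ℝ) (hα₁ : 1 < α) (hα₂ : α < 2) :
    ∃ c > 0, ∀ n₁ n₂ n₃ n : ℤ, n₁ - n₂ + n₃ - n = 0 → n₂ ≠ n₁ → n₂ ≠ n₃ →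
      (|(n₁ : ℝ)| ^ α - |(n₂ : ℝ)| ^ α + |(n₃ : ℝ)| ^ α - |(n : ℝ)| ^ α ≠ 0 ∧
        c * ((|n₁ - n₂| : ℤ) : ℝ) * ((|n₂ - n₃| : ℤ) : ℝ) *
            ((max (max |n₁| |n₂|) (max |n₃| |n|) : ℤ) : ℝ) ^ (α - 2)
          ≤ |(|(n₁ : ℝ)| ^ α - |(n₂ : ℝ)| ^ α + |(n₃ : ℝ)| ^ α - |(n : ℝ)| ^ α)|) := by
  refine ⟨α * (α - 1), by nlinarith, fun n₁ n₂ n₃ n hsum h₂₁ h₂₃ => ?_⟩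
  set M := max (max |n₁| |n₂|) (max |n₃| |n|)
  have h₁ : |n₁| ≤ M := le_max_of_le_left (le_max_left _ _)
  have h₂ : |n₂| ≤ M := le_max_of_le_left (le_max_right _ _)
  have h₃ : |n₃| ≤ M := le_max_of_le_right (le_max_left _ _)
  have h₄ : |n| ≤ M := le_max_of_le_right (le_max_right _ _)
  have hM : (0 : ℝ) < M := by
    have := (abs_pos.2 (sub_ne_zero.2 h₂₁.symm)).trans_le (abs_sub n₁ n₂)
    exact_mod_cast (by linarith : 0 < M)
  have hbound := mul_abs_sub_mul_abs_sub_le_abs_resonance (M := M) (p₁ := n₁) (p₂ := n₂)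
    (p₃ := n₃) (p₄ := n) hα₁ hα₂.le
    (by exact_mod_cast hsum) (by exact_mod_cast h₁) (by exact_mod_cast h₂) (by exact_mod_cast h₃)
    (by exact_mod_cast h₄)
  have hpos : 0 < α * (α - 1) * |(n₁ : ℝ) - n₂| * |(n₂ : ℝ) - n₃| * (M : ℝ) ^ (α - 2) := by
    have ha : (0 : ℝ) < |(n₁ : ℝ) - n₂| := abs_pos.2 (sub_ne_zero.2 (by exact_mod_cast h₂₁.symm))
    have hb : (0 : ℝ) < |(n₂ : ℝ) - n₃| := abs_pos.2 (sub_ne_zero.2 (by exact_mod_cast h₂₃))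
    have hα : 0 < α * (α - 1) := by nlinarith
    exact mul_pos (mul_pos (mul_pos hα ha) hb) (rpow_pos_of_pos hM _)
  push_cast
  exact ⟨abs_pos.1 (hpos.trans_le hbound), hbound⟩
end

section
/- Let 1/2 < β ≤ 1 and γ < 2β − 1. There exists C_γ > 0 such that for every a ∈ ℝ, ∑_{n∈ℤ} 1/(⟨n⟩^β ⟨n−a⟩^β) ≤ C_γ / ⟨a⟩^γ. -/
/-!
Since `⟨a⟩ ≤ ⟨n⟩ + ⟨n - a⟩`, the larger of the two brackets is at least `⟨a⟩ / 2`. Trading a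
power `γ ≥ 0` of the larger bracket for `⟨a⟩^(-γ)` bounds the summand by
`2^γ ⟨a⟩^(-γ) (⟨n⟩^(-s) + ⟨n - a⟩^(-s))` with `s = 2β - γ > 1`, and both series are bounded
uniformly in `a`, by comparing `⟨n - a⟩` with `⟨n - round a⟩` and reindexing. A negative `γ`
reduces to `γ = 0` because `⟨a⟩ ≥ 1`.
-/

/-- The Japanese bracket `⟨x⟩ = (1 + x²)^(1/2)`. -/
noncomputable def jb (x : ℝ) : ℝ := Real.sqrt (1 + x ^ 2)

lemma one_le_jb (x : ℝ) : 1 ≤ jb x :=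
  Real.one_le_sqrt.mpr (by nlinarith [sq_nonneg x])

lemma jb_pos (x : ℝ) : 0 < jb x :=
  one_pos.trans_le (one_le_jb x)

lemma abs_le_jb (x : ℝ) : |x| ≤ jb x :=
  Real.abs_le_sqrt (by linarith)

lemma jb_sq (x : ℝ) : jb x ^ 2 = 1 + x ^ 2 :=
  Real.sq_sqrt (by positivity)

lemma jb_add_le (x y : ℝ) : jb (x + y) ≤ jb x + |y| := by
  refine Real.sqrt_le_iff.mpr ⟨by positivity [jb_pos x], ?_⟩
  nlinarith [jb_sq x, sq_abs y, abs_mul x y, le_abs_self (x * y),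
    mul_le_mul_of_nonneg_right (abs_le_jb x) (abs_nonneg y)]

lemma jb_le_jb_add_jb_sub (x a : ℝ) : jb a ≤ jb x + jb (x - a) :=
  calc jb a = jb (x + (a - x)) := by ring_nf
    _ ≤ jb x + |a - x| := jb_add_le x (a - x)
    _ ≤ jb x + jb (x - a) := by rw [abs_sub_comm]; gcongr; exact abs_le_jb _

lemma jb_add_le_two_mul {x y : ℝ} (hy : |y| ≤ 1) : jb (x + y) ≤ 2 * jb x := by
  linarith [jb_add_le x y, one_le_jb x]

lemma summable_one_div_jb_rpow {s : ℝ} (hs : 1 < s) : Summable fun n : ℤ => 1 / jb n ^ s := by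
  refine Summable.of_norm_bounded_eventually (Real.summable_abs_int_rpow hs) ?_
  filter_upwards [Filter.eventually_cofinite_ne 0] with n hn
  rw [Real.norm_of_nonneg (by positivity [jb_pos n]), one_div, ← Real.rpow_neg (jb_pos n).le]
  exact Real.rpow_le_rpow_of_nonpos (abs_pos.mpr (Int.cast_ne_zero.mpr hn)) (abs_le_jb _)
    (by linarith)

lemma exists_tsum_one_div_jb_sub_rpow_le {s : ℝ} (hs : 1 < s) :
    ∃ K > 0, ∀ a : ℝ, ∑' n : ℤ, ENNReal.ofReal (1 / jb (n - a) ^ s) ≤ ENNReal.ofReal K := by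
  have hsum := summable_one_div_jb_rpow hs
  have hnonneg : ∀ n : ℤ, 0 ≤ 1 / jb n ^ s := fun n => by positivity [jb_pos n]
  refine ⟨2 ^ s * ∑' n : ℤ, 1 / jb n ^ s,
    mul_pos (by positivity) (hsum.tsum_pos hnonneg 0 (by simp [jb])), fun a => ?_⟩
  have hshift : ∀ n : ℤ, 1 / jb (n - a) ^ s ≤ 2 ^ s * (1 / jb ((n - round a : ℤ) : ℝ) ^ s) := by
    intro n
    have hround : jb ((n - round a : ℤ) : ℝ) ≤ 2 * jb (n - a) := by
      have := jb_add_le_two_mul (x := n - a) ((abs_sub_round a).trans (by norm_num))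
      rwa [sub_add_sub_cancel, ← Int.cast_sub] at this
    calc 1 / jb (n - a) ^ s = 2 ^ s * (1 / (2 * jb (n - a)) ^ s) := by
          rw [Real.mul_rpow (by norm_num) (jb_pos _).le]
          field_simp
      _ ≤ 2 ^ s * (1 / jb ((n - round a : ℤ) : ℝ) ^ s) := by
          have := jb_pos ((n - round a : ℤ) : ℝ)
          gcongr
  calc ∑' n : ℤ, ENNReal.ofReal (1 / jb (n - a) ^ s)
      ≤ ∑' n : ℤ, ENNReal.ofReal (2 ^ s * (1 / jb ((n - round a : ℤ) : ℝ) ^ s)) :=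
        ENNReal.tsum_le_tsum fun n => ENNReal.ofReal_le_ofReal (hshift n)
    _ = ∑' n : ℤ, ENNReal.ofReal (2 ^ s * (1 / jb n ^ s)) :=
        (Equiv.subRight (round a)).tsum_eq fun n : ℤ => ENNReal.ofReal (2 ^ s * (1 / jb n ^ s))
    _ = ENNReal.ofReal (2 ^ s * ∑' n : ℤ, 1 / jb n ^ s) := by
        rw [← ENNReal.ofReal_tsum_of_nonneg (fun n => by positivity [hnonneg n])
          (hsum.mul_left _), tsum_mul_left]

lemma rpow_two_mul_sub_mul_rpow_le {x y β γ : ℝ} (hx : 0 < x) (hxy : x ≤ y) (hγβ : γ ≤ β) :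
    x ^ (2 * β - γ) * y ^ γ ≤ x ^ β * y ^ β := by
  have hy : 0 < y := hx.trans_le hxy
  calc x ^ (2 * β - γ) * y ^ γ = x ^ β * (x ^ (β - γ) * y ^ γ) := by
        rw [← mul_assoc, ← Real.rpow_add hx]; ring_nf
    _ ≤ x ^ β * (y ^ (β - γ) * y ^ γ) := by
        gcongr
    _ = x ^ β * y ^ β := by
        rw [← Real.rpow_add hy]; ring_nf

lemma one_div_rpow_mul_rpow_le {x y z β γ : ℝ} (hx : 0 < x) (hy : 0 < y) (hz : 0 < z)
    (hzxy : z ≤ x + y) (hγ : 0 ≤ γ) (hγβ : γ ≤ β) :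
    1 / (x ^ β * y ^ β) ≤ 2 ^ γ / z ^ γ * (1 / x ^ (2 * β - γ) + 1 / y ^ (2 * β - γ)) := by
  wlog hxy : x ≤ y generalizing x y
  · rw [mul_comm, add_comm (1 / x ^ _)]
    exact this hy hx (by linarith) (by linarith)
  calc 1 / (x ^ β * y ^ β) ≤ 1 / (x ^ (2 * β - γ) * y ^ γ) :=
        one_div_le_one_div_of_le (by positivity) (rpow_two_mul_sub_mul_rpow_le hx hxy hγβ)
    _ = 2 ^ γ / (2 * y) ^ γ * (1 / x ^ (2 * β - γ)) := by
        rw [Real.mul_rpow (by norm_num) hy.le]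
        field_simp
    _ ≤ 2 ^ γ / z ^ γ * (1 / x ^ (2 * β - γ)) := by
        gcongr; linarith
    _ ≤ 2 ^ γ / z ^ γ * (1 / x ^ (2 * β - γ) + 1 / y ^ (2 * β - γ)) := by
        gcongr; exact le_add_of_nonneg_right (by positivity)

lemma exists_tsum_one_div_jb_rpow_mul_le_of_nonneg {β γ : ℝ} (hγ₀ : 0 ≤ γ) (hγβ : γ ≤ β)
    (hγ : γ < 2 * β - 1) :
    ∃ C > 0, ∀ a : ℝ, (∑' n : ℤ, ENNReal.ofReal (1 / (jb n ^ β * jb (n - a) ^ β)))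
      ≤ ENNReal.ofReal (C / jb a ^ γ) := by
  obtain ⟨K, hK, hsum⟩ := exists_tsum_one_div_jb_sub_rpow_le (s := 2 * β - γ) (by linarith)
  refine ⟨2 ^ γ * (2 * K), by positivity, fun a => ?_⟩
  have hw : 0 ≤ 2 ^ γ / jb a ^ γ := by positivity [jb_pos a]
  have hpt : ∀ n : ℤ, ENNReal.ofReal (1 / (jb n ^ β * jb (n - a) ^ β))
      ≤ ENNReal.ofReal (2 ^ γ / jb a ^ γ) * (ENNReal.ofReal (1 / jb (n - 0) ^ (2 * β - γ))
        + ENNReal.ofReal (1 / jb (n - a) ^ (2 * β - γ))) := by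
    intro n
    rw [sub_zero, ← ENNReal.ofReal_add (by positivity [jb_pos n]) (by positivity [jb_pos (n - a)]),
      ← ENNReal.ofReal_mul hw]
    exact ENNReal.ofReal_le_ofReal <| one_div_rpow_mul_rpow_le (jb_pos _) (jb_pos _) (jb_pos _)
      (jb_le_jb_add_jb_sub n a) hγ₀ hγβ
  calc _ ≤ _ := ENNReal.tsum_le_tsum hpt
    _ = ENNReal.ofReal (2 ^ γ / jb a ^ γ) * (∑' n : ℤ, ENNReal.ofReal (1 / jb (n - 0) ^ (2 * β - γ))
        + ∑' n : ℤ, ENNReal.ofReal (1 / jb (n - a) ^ (2 * β - γ))) := by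
        rw [ENNReal.tsum_mul_left, ENNReal.tsum_add]
    _ ≤ ENNReal.ofReal (2 ^ γ / jb a ^ γ) * (ENNReal.ofReal K + ENNReal.ofReal K) := by
        gcongr
        exacts [hsum 0, hsum a]
    _ = ENNReal.ofReal (2 ^ γ * (2 * K) / jb a ^ γ) := by
        rw [← ENNReal.ofReal_add hK.le hK.le, ← ENNReal.ofReal_mul hw]
        congr 1
        ring

/-- Discrete convolution estimate with Japanese brackets. -/
theorem sum_bracket_estimate (β γ : ℝ) (hβ₁ : 1 / 2 < β) (hβ₂ : β ≤ 1) (hγ : γ < 2 * β - 1) :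
    ∃ C > 0, ∀ a : ℝ,
      (∑' n : ℤ, ENNReal.ofReal (1 / (jb (n : ℝ) ^ β * jb ((n : ℝ) - a) ^ β)))
        ≤ ENNReal.ofReal (C / jb a ^ γ) := by
  obtain ⟨C, hC, hbound⟩ := exists_tsum_one_div_jb_rpow_mul_le_of_nonneg (le_max_right γ 0)
    (max_le (by linarith) (by linarith)) (max_lt hγ (by linarith))
  refine ⟨C, hC, fun a => (hbound a).trans (ENNReal.ofReal_le_ofReal ?_)⟩
  gcongr
  · positivity [jb_pos a]
  · exact one_le_jb a
  · exact le_max_left γ 0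
end

section
/- Let J ⊆ ℝ be an interval, I ⊆ ℝ a bounded interval of length |I|, and φ : ℝ → ℝ a continuously differentiable function such that |φ'(ξ)| ≥ m for all ξ ∈ J, for some m > 0. Then the set {k ∈ ℤ : k ∈ J and φ(k) ∈ I} is finite and its cardinality is at most 1 + |I|/m. -/
/-! By the mean value theorem, `|φ b - φ a| ≥ m |b - a|` for `a, b ∈ J`, so two integers counted
differ by at most `D = |I| / m`. A set of integers of diameter at most `D` lies in
`[a₀, a₀ + ⌊D⌋]` for its least element `a₀`, hence has at most `⌊D⌋ + 1 ≤ 1 + D` elements. -/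

open Set

lemma mul_abs_sub_le_abs_sub_of_le_abs_deriv {J : Set ℝ} (hJ : J.OrdConnected) {φ : ℝ → ℝ}
    (hφ : DifferentiableOn ℝ φ J) {m : ℝ} (hφ' : ∀ ξ ∈ J, m ≤ |deriv φ ξ|) {a b : ℝ}
    (ha : a ∈ J) (hb : b ∈ J) : m * |b - a| ≤ |φ b - φ a| := by
  wlog hab : a < b generalizing a b
  · rcases (not_lt.1 hab).eq_or_lt with rfl | hba
    · simp
    · simpa only [abs_sub_comm] using this hb ha hba
  have hIcc : Icc a b ⊆ J := hJ.out ha hb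
  obtain ⟨c, hc, hslope⟩ := exists_deriv_eq_slope φ hab (hφ.continuousOn.mono hIcc)
    (hφ.mono (Ioo_subset_Icc_self.trans hIcc))
  have hpos : 0 < b - a := sub_pos.2 hab
  calc m * |b - a| ≤ |deriv φ c| * |b - a| :=
        mul_le_mul_of_nonneg_right (hφ' c (hIcc (Ioo_subset_Icc_self hc))) (abs_nonneg _)
    _ = |φ b - φ a| := by rw [hslope, ← abs_mul, div_mul_cancel₀ _ hpos.ne']

lemma Int.finite_and_ncard_le_of_forall_sub_le {S : Set ℤ} {D : ℝ} (hD : 0 ≤ D)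
    (hS : ∀ a ∈ S, ∀ b ∈ S, (b - a : ℝ) ≤ D) : S.Finite ∧ (S.ncard : ℝ) ≤ 1 + D := by
  rcases S.eq_empty_or_nonempty with rfl | ⟨a, ha⟩
  · exact ⟨finite_empty, by rw [ncard_empty, Nat.cast_zero]; linarith⟩
  have hsub_le : ∀ a ∈ S, ∀ b ∈ S, b - a ≤ ⌊D⌋ := fun a ha b hb =>
    Int.le_floor.2 (by exact_mod_cast hS a ha b hb)
  have hbdd : BddBelow S := ⟨a - ⌊D⌋, fun b hb => by linarith [hsub_le b hb a ha]⟩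
  set a₀ := sInf S
  have hsub : S ⊆ Icc a₀ (a₀ + ⌊D⌋) := fun b hb =>
    ⟨csInf_le hbdd hb, by linarith [hsub_le a₀ (Int.csInf_mem ⟨a, ha⟩ hbdd) b hb]⟩
  refine ⟨(finite_Icc _ _).subset hsub, ?_⟩
  have hcard : S.ncard ≤ (⌊D⌋ + 1).toNat := by
    have := Set.ncard_le_ncard hsub (finite_Icc _ _)
    rwa [← Finset.coe_Icc, Set.ncard_coe_finset, Int.card_Icc, add_assoc,
      add_sub_cancel_left] at this
  have : ((⌊D⌋ + 1).toNat : ℝ) = ⌊D⌋ + 1 := by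
    exact_mod_cast Int.toNat_of_nonneg (by linarith [Int.floor_nonneg.2 hD])
  linarith [Int.floor_le D, (Nat.cast_le (α := ℝ)).2 hcard]

theorem counting_lemma_general (J I : Set ℝ) (hJ : J.OrdConnected)
    (hIbdd : Bornology.IsBounded I) (φ : ℝ → ℝ) (hφ : ContDiff ℝ 1 φ)
    (m : ℝ) (hm : 0 < m) (hφ' : ∀ ξ ∈ J, m ≤ |deriv φ ξ|) :
    {k : ℤ | (k : ℝ) ∈ J ∧ φ (k : ℝ) ∈ I}.Finite ∧
      (({k : ℤ | (k : ℝ) ∈ J ∧ φ (k : ℝ) ∈ I}.ncard : ℝ) ≤ 1 + Metric.diam I / m) := by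
  refine Int.finite_and_ncard_le_of_forall_sub_le (div_nonneg Metric.diam_nonneg hm.le) ?_
  rintro a ⟨haJ, haI⟩ b ⟨hbJ, hbI⟩
  rw [le_div_iff₀' hm]
  calc m * (b - a : ℝ) ≤ m * |(b : ℝ) - a| := mul_le_mul_of_nonneg_left (le_abs_self _) hm.le
    _ ≤ |φ b - φ a| := mul_abs_sub_le_abs_sub_of_le_abs_deriv hJ
        (hφ.differentiable one_ne_zero).differentiableOn hφ' haJ hbJ
    _ ≤ Metric.diam I := by
        simpa only [Real.dist_eq] using Metric.dist_le_diam_of_mem hIbdd hbI haI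

/-- Counting lemma: integers in an interval `J` whose image under a `C¹` function `φ`
with `|φ'| ≥ m` on `J` lies in a bounded interval `I` form a finite set of
cardinality at most `1 + |I| / m`. -/
theorem counting_lemma (J I : Set ℝ) (hJ : J.OrdConnected) (hI : I.OrdConnected)
    (hIbdd : Bornology.IsBounded I) (φ : ℝ → ℝ) (hφ : ContDiff ℝ 1 φ)
    (m : ℝ) (hm : 0 < m) (hφ' : ∀ ξ ∈ J, m ≤ |deriv φ ξ|) :
    {k : ℤ | (k : ℝ) ∈ J ∧ φ (k : ℝ) ∈ I}.Finite ∧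
      (({k : ℤ | (k : ℝ) ∈ J ∧ φ (k : ℝ) ∈ I}.ncard : ℝ) ≤ 1 + Metric.diam I / m) :=
  counting_lemma_general J I hJ hIbdd φ hφ m hm hφ'
end

section
/- Let 1 < α < 2. There exists C > 0, depending only on α, such that for all a ∈ ℤ, l ∈ ℝ, r ≥ 1/100 and all real N₁, N₂ ≥ 1, the set A_{a,l,N₁,N₂}(r) := {k ∈ ℤ : N₁ ≤ |k| ≤ 2N₁, N₂ ≤ |a−k| ≤ 2N₂, and | |k|^α + |a−k|^α − l | ≤ r} is finite with cardinality at most C · min(N₁,N₂)^{1−α/2} · r^{1/2}. -/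
/-!
On the window `|k| ≤ 2N₁` the function `x ↦ |x|^α + |a - x|^α` is `m`-strongly convex with
`m = α(α-1)(2N₁)^(α-2)`: the second derivative of `|x|^α` only grows towards `0`. Symmetrically it
is strongly convex on `|a - k| ≤ 2N₂`, so we may use `m ≍ min(N₁, N₂)^(α-2)`. If a strongly convex
`f` is within `r` of `l` at three points `s ≤ k ≤ t`, then `(k - s)(t - k) ≤ 4r/m`; taking `s`, `t`
the extreme elements of `A`, every element of `A` lies within `√(4r/m)` of an end, whence
`#A ≤ 2√(4r/m) + 2 ≲ min(N₁, N₂)^(1 - α/2) r^(1/2)` (the `+ 2` is absorbed as `r ≥ 1/100`).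
-/

open Set Real

theorem UniformConvexOn.translate_right {E : Type*} [NormedAddCommGroup E] [NormedSpace ℝ E]
    {s : Set E} {φ : ℝ → ℝ} {f : E → ℝ} (hf : UniformConvexOn s φ f) (c : E) :
    UniformConvexOn ((fun z => c + z) ⁻¹' s) φ (f ∘ fun z => c + z) :=
  ⟨hf.1.translate_preimage_right c, fun x hx y hy a b ha hb hab =>
    calc f (c + (a • x + b • y)) = f (a • (c + x) + b • (c + y)) := by
          rw [smul_add, smul_add, add_add_add_comm, Convex.combo_self hab]
      _ ≤ a • f (c + x) + b • f (c + y) - a * b * φ ‖(c + x) - (c + y)‖ := hf.2 hx hy ha hb hab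
      _ = _ := by rw [add_sub_add_left_eq_sub]; rfl⟩

theorem StrongConvexOn.add_convexOn {E : Type*} [NormedAddCommGroup E] [NormedSpace ℝ E]
    {s : Set E} {m : ℝ} {f g : E → ℝ} (hf : StrongConvexOn s m f) (hg : ConvexOn ℝ s g) :
    StrongConvexOn s m (f + g) := by
  have h := UniformConvexOn.add hf hg.uniformConvexOn_zero
  rwa [add_zero] at h

theorem convexOn_comp_abs {s : Set ℝ} {φ : ℝ → ℝ} (hs : Convex ℝ s) (hneg : ∀ x ∈ s, -x ∈ s)
    (hφ : ConvexOn ℝ (s ∩ Ici 0) φ) (hφm : MonotoneOn φ (s ∩ Ici 0)) :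
    ConvexOn ℝ s fun x => φ |x| := by
  have himage : abs '' s = s ∩ Ici 0 := by
    ext y
    constructor
    · rintro ⟨x, hx, rfl⟩
      refine ⟨?_, abs_nonneg x⟩
      rcases abs_choice x with h | h <;> rw [h]
      exacts [hx, hneg x hx]
    · rintro ⟨hy, hy0⟩
      exact ⟨y, hy, abs_of_nonneg hy0⟩
  rw [← himage] at hφ hφm
  exact hφ.comp (convexOn_norm hs) hφm

theorem convexOn_abs_rpow {α : ℝ} (hα : 1 ≤ α) : ConvexOn ℝ univ fun x : ℝ => |x| ^ α :=
  convexOn_comp_abs convex_univ (fun _ _ => mem_univ _) (by simpa using convexOn_rpow hα)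
    (by simpa using monotoneOn_rpow_Ici_of_exponent_nonneg (by linarith))

theorem hasDerivAt_rpow_sub_mul_sq {α m y : ℝ} (hy : y ≠ 0) :
    HasDerivAt (fun y => y ^ α - m / 2 * y ^ 2) (α * y ^ (α - 1) - m * y) y :=
  ((hasDerivAt_rpow_const (Or.inl hy)).sub ((hasDerivAt_pow 2 y).const_mul (m / 2))).congr_deriv
    (by ring)

section RpowSubMulSq

variable {α L : ℝ}

theorem convexOn_rpow_sub_mul_sq (hα₁ : 1 ≤ α) (hα₂ : α ≤ 2) :
    ConvexOn ℝ (Icc 0 L) fun y => y ^ α - α * (α - 1) * L ^ (α - 2) / 2 * y ^ 2 := by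
  refine convexOn_of_hasDerivWithinAt2_nonneg (convex_Icc 0 L)
    ((continuous_rpow_const (by linarith)).sub (by fun_prop)).continuousOn
    (f' := fun y => α * y ^ (α - 1) - α * (α - 1) * L ^ (α - 2) * y)
    (f'' := fun y => α * ((α - 1) * y ^ (α - 2)) - α * (α - 1) * L ^ (α - 2))
    (fun y hy => ?_) (fun y hy => ?_) (fun y hy => ?_) <;> rw [interior_Icc] at hy
  · exact (hasDerivAt_rpow_sub_mul_sq hy.1.ne').hasDerivWithinAt
  · refine ((((hasDerivAt_rpow_const (Or.inl hy.1.ne')).const_mul α).sub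
      ((hasDerivAt_id y).const_mul _)).congr_deriv ?_).hasDerivWithinAt
    rw [sub_sub, one_add_one_eq_two, mul_one]
  · have := rpow_le_rpow_of_nonpos hy.1 hy.2.le (by linarith : α - 2 ≤ 0)
    nlinarith [mul_le_mul_of_nonneg_left this (by nlinarith : 0 ≤ α * (α - 1))]

theorem monotoneOn_rpow_sub_mul_sq (hα₁ : 1 ≤ α) (hα₂ : α ≤ 2) :
    MonotoneOn (fun y => y ^ α - α * (α - 1) * L ^ (α - 2) / 2 * y ^ 2) (Icc 0 L) := by
  refine monotoneOn_of_hasDerivWithinAt_nonneg (convex_Icc 0 L)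
    ((continuous_rpow_const (by linarith)).sub (by fun_prop)).continuousOn
    (f' := fun y => α * y ^ (α - 1) - α * (α - 1) * L ^ (α - 2) * y)
    (fun y hy => ?_) (fun y hy => ?_) <;> rw [interior_Icc] at hy
  · exact (hasDerivAt_rpow_sub_mul_sq hy.1.ne').hasDerivWithinAt
  · have hpow := rpow_le_rpow_of_nonpos hy.1 hy.2.le (by linarith : α - 2 ≤ 0)
    have hy0 := rpow_nonneg hy.1.le (α - 2)
    have hsplit : y ^ (α - 1) = y ^ (α - 2) * y := by rw [← rpow_add_one hy.1.ne']; ring_nf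
    rw [hsplit]
    have hm : α * (α - 1) * L ^ (α - 2) ≤ α * y ^ (α - 2) := by
      nlinarith [mul_le_mul_of_nonneg_left hpow (by nlinarith : 0 ≤ α * (α - 1)),
        mul_nonneg (mul_nonneg hy0 (by linarith : (0 : ℝ) ≤ 2 - α)) (by linarith : 0 ≤ α)]
    nlinarith [mul_le_mul_of_nonneg_right hm hy.1.le]

/-- Writing `|x|^α - m/2 x²` as `φ |x|`, the kink of `|x|^α` at `0` is harmless because `φ` is
convex and nondecreasing on `[0, L]`. -/
theorem strongConvexOn_abs_rpow (hα₁ : 1 ≤ α) (hα₂ : α ≤ 2) :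
    StrongConvexOn (Icc (-L) L) (α * (α - 1) * L ^ (α - 2)) fun x : ℝ => |x| ^ α := by
  have hIcc : Icc (-L) L ∩ Ici 0 = Icc 0 L := by
    ext y; simp only [mem_inter_iff, mem_Icc, mem_Ici]; constructor <;> intro h <;> grind
  rw [strongConvexOn_iff_convex]
  simp only [norm_eq_abs]
  exact convexOn_comp_abs (convex_Icc _ _) (fun x hx => ⟨neg_le_neg hx.2, neg_le.mp hx.1⟩)
    (hIcc ▸ convexOn_rpow_sub_mul_sq hα₁ hα₂) (hIcc ▸ monotoneOn_rpow_sub_mul_sq hα₁ hα₂)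

theorem strongConvexOn_abs_sub_rpow_add_abs_sub_rpow (hα₁ : 1 ≤ α) (hα₂ : α ≤ 2) (c d : ℝ) :
    StrongConvexOn (Icc (c - L) (c + L)) (α * (α - 1) * L ^ (α - 2))
      fun x : ℝ => |x - c| ^ α + |x - d| ^ α := by
  have hpre : (fun z => -c + z) ⁻¹' Icc (-L) L = Icc (c - L) (c + L) := by
    ext x; simp only [mem_preimage, mem_Icc]; constructor <;> intro h <;> constructor <;> linarith
  have hc := UniformConvexOn.translate_right (strongConvexOn_abs_rpow (L := L) hα₁ hα₂) (-c)
  rw [hpre] at hc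
  have hd := ((convexOn_abs_rpow hα₁).translate_right (-d)).subset (subset_univ _)
    (convex_Icc (c - L) (c + L))
  convert StrongConvexOn.add_convexOn hc hd using 1
  ext x
  simp [neg_add_eq_sub]

end RpowSubMulSq

theorem StrongConvexOn.sub_mul_sub_le {f : ℝ → ℝ} {s : Set ℝ} {m : ℝ} (hf : StrongConvexOn s m f)
    (hm : 0 < m) {x y z l r : ℝ} (hx : x ∈ s) (hz : z ∈ s) (hxy : x ≤ y) (hyz : y ≤ z)
    (hfx : |f x - l| ≤ r) (hfy : |f y - l| ≤ r) (hfz : |f z - l| ≤ r) :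
    (y - x) * (z - y) ≤ 4 * r / m := by
  rw [le_div_iff₀ hm]
  rcases hxy.eq_or_lt with rfl | hxy'
  · nlinarith [abs_nonneg (f x - l)]
  have hd : 0 < z - x := by linarith
  have hy : ((z - y) / (z - x)) • x + ((y - x) / (z - x)) • z = y := by
    simp only [smul_eq_mul]; field_simp; ring
  have hcomb := hf.2 hx hz (div_nonneg (sub_nonneg.2 hyz) hd.le)
    (div_nonneg (sub_nonneg.2 hxy) hd.le) (by field_simp; ring)
  rw [hy, norm_eq_abs, abs_of_neg (by linarith : x - z < 0)] at hcomb
  simp only [smul_eq_mul] at hcomb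
  have key : (z - x) * f y + m / 2 * ((y - x) * (z - y)) * (z - x) ≤
      (z - y) * f x + (y - x) * f z := by
    have := mul_le_mul_of_nonneg_left hcomb hd.le
    field_simp at this
    nlinarith
  rw [abs_le] at hfx hfy hfz
  nlinarith [mul_le_mul_of_nonneg_left hfx.2 (sub_nonneg.2 hyz),
    mul_le_mul_of_nonneg_left hfz.2 (sub_nonneg.2 hxy)]

theorem Int.ncard_le_of_sub_mul_sub_le {S : Set ℤ} {a b : ℤ} {D : ℝ} (hD : 0 ≤ D)
    (hS : ∀ k ∈ S, a ≤ k ∧ k ≤ b ∧ ((k : ℝ) - a) * (b - k) ≤ D) :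
    (S.ncard : ℝ) ≤ 2 * √D + 2 := by
  set q := ⌊√D⌋
  have hq : 0 ≤ q := Int.floor_nonneg.2 (Real.sqrt_nonneg D)
  have hcover : S ⊆ ↑(Finset.Icc a (a + q) ∪ Finset.Icc (b - q) b) := by
    intro k hk
    obtain ⟨hak, hkb, hprod⟩ := hS k hk
    have : (k : ℝ) - a ≤ √D ∨ (b : ℝ) - k ≤ √D := by
      by_contra! h
      nlinarith [Real.sq_sqrt hD, Real.sqrt_nonneg D]
    simp only [Finset.coe_union, Finset.coe_Icc, mem_union, mem_Icc]
    rcases this with h | h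
    · have : k - a ≤ q := Int.le_floor.2 (by push_cast; exact h)
      omega
    · have : b - k ≤ q := Int.le_floor.2 (by push_cast; exact h)
      omega
  have hcard : (S.ncard : ℤ) ≤ 2 * q + 2 := by
    have h1 := Set.ncard_le_ncard hcover (Finset.finite_toSet _)
    rw [Set.ncard_coe_finset] at h1
    have h2 := (h1.trans (Finset.card_union_le _ _))
    have h3 := Int.card_Icc_of_le a (a + q) (by omega)
    have h4 := Int.card_Icc_of_le (b - q) b (by omega)
    omega
  have hqD : (q : ℝ) ≤ √D := Int.floor_le _
  have : (S.ncard : ℝ) ≤ 2 * q + 2 := by exact_mod_cast hcard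
  linarith

theorem StrongConvexOn.ncard_le_of_abs_sub_le {f : ℝ → ℝ} {s : Set ℝ} {m : ℝ}
    (hf : StrongConvexOn s m f) (hm : 0 < m) {S : Set ℤ} {l r : ℝ} (hS : ∀ k ∈ S, (k : ℝ) ∈ s ∧ |f k - l| ≤ r) :
    (S.ncard : ℝ) ≤ 2 * √(4 * r / m) + 2 := by
  rcases S.infinite_or_finite with hinf | hfin
  · rw [hinf.ncard, Nat.cast_zero]; positivity
  rcases S.eq_empty_or_nonempty with rfl | hne
  · rw [ncard_empty, Nat.cast_zero]; positivity
  obtain ⟨a, haS, ha⟩ := S.exists_min_image id hfin hne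
  obtain ⟨b, hbS, hb⟩ := S.exists_max_image id hfin hne
  have hr : 0 ≤ r := (abs_nonneg _).trans (hS a haS).2
  refine Int.ncard_le_of_sub_mul_sub_le (by positivity) fun k hk => ⟨ha k hk, hb k hk, ?_⟩
  exact hf.sub_mul_sub_le hm (hS a haS).1 (hS b hbS).1 (by exact_mod_cast ha k hk)
    (by exact_mod_cast hb k hk) (hS a haS).2 (hS k hk).2 (hS b hbS).2

theorem two_mul_sqrt_add_two_le {α M r : ℝ} (hα₁ : 1 < α) (hα₂ : α < 2) (hM : 1 ≤ M)
    (hr : 1 / 100 ≤ r) :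
    2 * √(4 * r / (α * (α - 1) * (2 * M) ^ (α - 2))) + 2 ≤
      (8 / √(α * (α - 1)) + 20) * M ^ (1 - α / 2) * r ^ ((1 : ℝ) / 2) := by
  set v := α * (α - 1)
  have hv : 0 < v := by positivity
  have hM0 : 0 < M := by linarith
  have hr0 : 0 < r := by linarith
  have hMpow : 1 ≤ M ^ (2 - α) := one_le_rpow hM (by linarith)
  have hw : M ^ (1 - α / 2) * r ^ ((1 : ℝ) / 2) = √(M ^ (2 - α) * r) := by
    rw [sqrt_eq_rpow, mul_rpow (by positivity) hr0.le, ← rpow_mul hM0.le]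
    ring_nf
  have hw₁ : 1 / 10 ≤ √(M ^ (2 - α) * r) := (le_sqrt' (by norm_num)).2 (by nlinarith)
  have h2M : (2 * M) ^ (α - 2) = ((2 : ℝ) ^ (2 - α) * M ^ (2 - α))⁻¹ := by
    rw [← mul_rpow (by norm_num) hM0.le, ← rpow_neg (by positivity), neg_sub]
  have h2pow : (2 : ℝ) ^ (2 - α) ≤ 4 :=
    (rpow_le_rpow_of_exponent_le one_le_two (by linarith : 2 - α ≤ 2)).trans_eq (by norm_num)
  have hsqrt : √(4 * r / (v * (2 * M) ^ (α - 2))) ≤ 4 / √v * √(M ^ (2 - α) * r) := by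
    have h : 4 * r / (v * (2 * M) ^ (α - 2)) = 4 * r * (2 ^ (2 - α) * M ^ (2 - α)) / v := by
      rw [h2M]; field_simp
    rw [sqrt_le_left (by positivity), mul_pow, div_pow, sq_sqrt hv.le, sq_sqrt (by positivity),
      h, div_mul_eq_mul_div, div_le_div_iff_of_pos_right hv]
    nlinarith [mul_le_mul_of_nonneg_right h2pow (by positivity : 0 ≤ M ^ (2 - α) * r)]
  rw [mul_assoc (8 / √v + 20), hw]
  have h8 : (8 / √v + 20) * √(M ^ (2 - α) * r) = 2 * (4 / √v * √(M ^ (2 - α) * r)) +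
      20 * √(M ^ (2 - α) * r) := by ring
  linarith

/-- Counting bound for the sets `A_{a,l,N₁,N₂}(r)`. -/
theorem counting_A_bound (α : ℝ) (hα₁ : 1 < α) (hα₂ : α < 2) :
    ∃ C > 0, ∀ (a : ℤ) (l r N₁ N₂ : ℝ), 1 / 100 ≤ r → 1 ≤ N₁ → 1 ≤ N₂ →
      {k : ℤ | N₁ ≤ |(k : ℝ)| ∧ |(k : ℝ)| ≤ 2 * N₁ ∧
          N₂ ≤ |(a : ℝ) - (k : ℝ)| ∧ |(a : ℝ) - (k : ℝ)| ≤ 2 * N₂ ∧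
          |(|(k : ℝ)| ^ α + |(a : ℝ) - (k : ℝ)| ^ α - l)| ≤ r}.Finite ∧
      (({k : ℤ | N₁ ≤ |(k : ℝ)| ∧ |(k : ℝ)| ≤ 2 * N₁ ∧
          N₂ ≤ |(a : ℝ) - (k : ℝ)| ∧ |(a : ℝ) - (k : ℝ)| ≤ 2 * N₂ ∧
          |(|(k : ℝ)| ^ α + |(a : ℝ) - (k : ℝ)| ^ α - l)| ≤ r}.ncard : ℝ)
        ≤ C * (min N₁ N₂) ^ (1 - α / 2) * r ^ ((1 : ℝ) / 2)) := by
  refine ⟨8 / √(α * (α - 1)) + 20, by positivity, fun a l r N₁ N₂ hr hN₁ hN₂ => ?_⟩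
  set A := {k : ℤ | N₁ ≤ |(k : ℝ)| ∧ |(k : ℝ)| ≤ 2 * N₁ ∧
    N₂ ≤ |(a : ℝ) - (k : ℝ)| ∧ |(a : ℝ) - (k : ℝ)| ≤ 2 * N₂ ∧
    |(|(k : ℝ)| ^ α + |(a : ℝ) - (k : ℝ)| ^ α - l)| ≤ r}
  have hm : ∀ N : ℝ, 1 ≤ N → 0 < α * (α - 1) * (2 * N) ^ (α - 2) := fun N hN =>
    mul_pos (mul_pos (by linarith) (by linarith)) (rpow_pos_of_pos (by linarith) _)
  have h₁ : (A.ncard : ℝ) ≤ 2 * √(4 * r / (α * (α - 1) * (2 * N₁) ^ (α - 2))) + 2 :=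
    (strongConvexOn_abs_sub_rpow_add_abs_sub_rpow hα₁.le hα₂.le 0 a).ncard_le_of_abs_sub_le
      (hm N₁ hN₁) fun k hk => ⟨by simpa using abs_le.1 hk.2.1,
        by simpa [abs_sub_comm] using hk.2.2.2.2⟩
  have h₂ : (A.ncard : ℝ) ≤ 2 * √(4 * r / (α * (α - 1) * (2 * N₂) ^ (α - 2))) + 2 :=
    (strongConvexOn_abs_sub_rpow_add_abs_sub_rpow hα₁.le hα₂.le a 0).ncard_le_of_abs_sub_le
      (hm N₂ hN₂) fun k hk => ⟨by constructor <;> linarith [abs_le.1 hk.2.2.2.1],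
        by simpa [abs_sub_comm, add_comm] using hk.2.2.2.2⟩
  have hA : A ⊆ ((↑) : ℤ → ℝ) ⁻¹' Icc (-(2 * N₁)) (2 * N₁) := fun k hk => abs_le.1 hk.2.1
  rw [Int.preimage_Icc] at hA
  refine ⟨(finite_Icc _ _).subset hA, ?_⟩
  refine le_trans ?_ (two_mul_sqrt_add_two_le hα₁ hα₂ (le_min hN₁ hN₂) hr)
  rcases min_choice N₁ N₂ with h | h <;> rw [h] <;> assumption
end

section
/- Let 1 < α ≤ 2 and T > 0. There exists C > 0, depending only on α and T, such that for every real N ≥ 1 and every finitely supported family (c_n)_{n∈ℤ} of complex numbers with c_n = 0 unless N ≤ |n| ≤ 2N, the function u(t,x) := ∑_{n∈ℤ} c_n e^{i(n x + |n|^α t)} satisfies (∫₀^T ∫₀^{2π} |u(t,x)|⁴ dx dt)^{1/2} ≤ C · (sup_{a∈ℤ, l∈ℤ} #A_{a,l,N}(1/2))^{1/2} · ∑_{n∈ℤ} |c_n|², where A_{a,l,N}(1/2) := {k ∈ ℤ : N ≤ |k| ≤ 2N, N ≤ |a−k| ≤ 2N, and | |k|^α + |a−k|^α − l | ≤ 1/2}.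 -/
/-!
Squaring `u` and applying Parseval in `x` turns the left-hand side into
`2π ∑ₐ ∫₀ᵀ |∑_{k + m = a} c_k c_m e^{i(|k|^α + |m|^α) t}|² dt`. For each `a` this is the `L²` norm
on `[0, T]` of an exponential sum whose frequencies put at most `M = sup #A_{a,l,N}(1/2)` points
into any window `[l - 1/2, l + 1/2]`. Such sums satisfy
`∫₀ᵀ |∑ d_k e^{iμ_k t}|² ≤ C_T M ∑ |d_k|²`: dominate `1_{[0,T]}` by a tent weight, whose Fourier
transform is `O(min(T, 1/(T s²)))`, so that every row of the resulting Gram matrix has sum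
`O(M)`, and conclude by the Schur test. Summing over `a` gives `C_T M (∑ |c_n|²)²`.
-/

open MeasureTheory Complex ComplexConjugate Finset

noncomputable def tent (T t : ℝ) : ℝ := 2 * max 0 (1 - |t - T / 2| / T)

namespace tent

variable {T : ℝ}

lemma nonneg (T t : ℝ) : 0 ≤ tent T t := by unfold tent; positivity

lemma le_two (hT : 0 < T) (t : ℝ) : tent T t ≤ 2 := by
  have : 0 ≤ |t - T / 2| / T := by positivity
  unfold tent; linarith [max_le (zero_le_one' ℝ) (by linarith : 1 - |t - T / 2| / T ≤ 1)]

lemma continuous (T : ℝ) : Continuous (tent T) := by unfold tent; fun_prop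

lemma one_le (hT : 0 < T) {t : ℝ} (ht : t ∈ Set.Icc 0 T) : 1 ≤ tent T t := by
  have : |t - T / 2| / T ≤ 1 / 2 := by
    rw [div_le_iff₀ hT, abs_le]; constructor <;> linarith [ht.1, ht.2]
  unfold tent; linarith [le_max_right 0 (1 - |t - T / 2| / T)]

lemma eq_zero_of_notMem (hT : 0 < T) {t : ℝ} (ht : t ∉ Set.Icc (-(T / 2)) (3 * T / 2)) :
    tent T t = 0 := by
  have : T ≤ |t - T / 2| := by
    rw [Set.mem_Icc, not_and_or, not_le, not_le] at ht
    rcases ht with ht | ht <;> [rw [abs_sub_comm]; skip] <;> exact le_abs.2 (.inl (by linarith))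
  have : 1 - |t - T / 2| / T ≤ 0 := by rw [sub_nonpos, le_div_iff₀ hT]; linarith
  simp [tent, max_eq_left this]

lemma hasCompactSupport (hT : 0 < T) : HasCompactSupport (tent T) :=
  HasCompactSupport.intro isCompact_Icc fun _ ↦ eq_zero_of_notMem hT

lemma eq_on_left (hT : 0 < T) {t : ℝ} (ht : t ∈ Set.Icc (-(T / 2)) (T / 2)) :
    tent T t = 1 + 2 / T * t := by
  have : (T / 2 - t) / T ≤ 1 := by rw [div_le_one hT]; linarith [ht.1]
  rw [tent, abs_of_nonpos (by linarith [ht.2]), neg_sub, max_eq_right (by linarith)]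
  field_simp; ring

lemma eq_on_right (hT : 0 < T) {t : ℝ} (ht : t ∈ Set.Icc (T / 2) (3 * T / 2)) :
    tent T t = 3 - 2 / T * t := by
  have : (t - T / 2) / T ≤ 1 := by rw [div_le_one hT]; linarith [ht.2]
  rw [tent, abs_of_nonneg (by linarith [ht.1]), max_eq_right (by linarith)]
  field_simp; ring

end tent

lemma integral_affine_mul_cexp {z : ℂ} (hz : z ≠ 0) (p q : ℂ) (a b : ℝ) :
    ∫ t in a..b, (p + q * t) * exp (z * t) =
      ((p + q * b) / z - q / z ^ 2) * exp (z * b) - ((p + q * a) / z - q / z ^ 2) * exp (z * a) := by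
  refine intervalIntegral.integral_eq_sub_of_hasDerivAt
    (f := fun u : ℝ ↦ ((p + q * u) / z - q / z ^ 2) * exp (z * u)) (fun t _ ↦ ?_)
    ((by fun_prop : Continuous fun t : ℝ ↦ (p + q * t) * exp (z * t)).intervalIntegrable a b)
  have hlin : HasDerivAt (fun u : ℝ ↦ p + q * u) q t := by
    simpa using ((hasDerivAt_id t).ofReal_comp.const_mul q).const_add p
  have hexp : HasDerivAt (fun u : ℝ ↦ exp (z * u)) (exp (z * t) * z) t := by
    simpa using ((hasDerivAt_id t).ofReal_comp.const_mul z).cexp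
  refine (((hlin.div_const z).sub_const (q / z ^ 2)).mul hexp).congr_deriv ?_
  field_simp
  ring

lemma norm_exp_I_mul_ofReal_mul_ofReal (s t : ℝ) : ‖exp (I * s * t)‖ = 1 := by
  rw [norm_exp]; simp

noncomputable def tentFourier (T s : ℝ) : ℂ := ∫ t : ℝ, (tent T t : ℂ) * exp (I * s * t)

namespace tentFourier

variable {T : ℝ}

lemma integrable (hT : 0 < T) (s : ℝ) :
    Integrable fun t : ℝ ↦ (tent T t : ℂ) * exp (I * s * t) :=
  ((continuous_ofReal.comp (tent.continuous T)).mul (by fun_prop)).integrable_of_hasCompactSupport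
    ((tent.hasCompactSupport hT).comp_left ofReal_zero).mul_right

lemma eq_intervalIntegral (hT : 0 < T) (s : ℝ) :
    tentFourier T s = ∫ t in (-(T / 2))..(3 * T / 2), (tent T t : ℂ) * exp (I * s * t) := by
  rw [intervalIntegral.integral_of_le (by linarith), ← integral_Icc_eq_integral_Ioc, tentFourier,
    setIntegral_eq_integral_of_forall_compl_eq_zero fun t ht ↦ by simp [tent.eq_zero_of_notMem hT ht]]

lemma norm_le (hT : 0 < T) (s : ℝ) : ‖tentFourier T s‖ ≤ 4 * T := by
  have hbound : ∀ t : ℝ, ‖(tent T t : ℂ) * exp (I * s * t)‖ ≤ 2 := fun t ↦ by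
    rw [norm_mul, norm_exp_I_mul_ofReal_mul_ofReal, norm_real,
      Real.norm_of_nonneg (tent.nonneg T t), mul_one]
    exact tent.le_two hT t
  rw [eq_intervalIntegral hT]
  refine (intervalIntegral.norm_integral_le_of_norm_le_const fun t _ ↦ hbound t).trans_eq ?_
  rw [abs_of_nonneg (by linarith)]; ring

lemma eq_closedForm (hT : 0 < T) {s : ℝ} (hs : s ≠ 0) :
    tentFourier T s = 2 / (T * (I * s) ^ 2) *
      (exp (I * s * (-(T / 2) : ℝ)) - 2 * exp (I * s * (T / 2 : ℝ)) +
        exp (I * s * (3 * T / 2 : ℝ))) := by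
  have hz : I * (s : ℂ) ≠ 0 := by simp [hs]
  have hT' : (T : ℂ) ≠ 0 := by exact_mod_cast hT.ne'
  rw [eq_intervalIntegral hT, ← intervalIntegral.integral_add_adjacent_intervals (b := T / 2)
    ((integrable hT s).intervalIntegrable) ((integrable hT s).intervalIntegrable)]
  have hleft : ∫ t in (-(T / 2))..(T / 2), (tent T t : ℂ) * exp (I * s * t) =
      ∫ t in (-(T / 2))..(T / 2), (1 + 2 / T * t) * exp (I * s * t) := by
    refine intervalIntegral.integral_congr fun t ht ↦ ?_
    rw [Set.uIcc_of_le (by linarith)] at ht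
    simp [tent.eq_on_left hT ht]
  have hright : ∫ t in (T / 2)..(3 * T / 2), (tent T t : ℂ) * exp (I * s * t) =
      ∫ t in (T / 2)..(3 * T / 2), (3 + (-2 / T) * t) * exp (I * s * t) := by
    refine intervalIntegral.integral_congr fun t ht ↦ ?_
    rw [Set.uIcc_of_le (by linarith)] at ht
    simp [tent.eq_on_right hT ht]
    ring
  rw [hleft, hright, integral_affine_mul_cexp hz, integral_affine_mul_cexp hz]
  push_cast
  field_simp
  ring

lemma norm_le_div_sq (hT : 0 < T) {s : ℝ} (hs : s ≠ 0) : ‖tentFourier T s‖ ≤ 8 / (T * s ^ 2) := by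
  have hsum : ‖exp (I * s * (-(T / 2) : ℝ)) - 2 * exp (I * s * (T / 2 : ℝ)) +
      exp (I * s * (3 * T / 2 : ℝ))‖ ≤ 4 := by
    refine (norm_add_le _ _).trans ((add_le_add_left (norm_sub_le _ _) _).trans_eq ?_)
    simp only [norm_mul, norm_exp_I_mul_ofReal_mul_ofReal, Complex.norm_ofNat]
    norm_num
  have hcoef : ‖2 / (T * (I * s) ^ 2)‖ = 2 / (T * s ^ 2) := by simp [abs_of_pos hT]
  rw [eq_closedForm hT hs, norm_mul, hcoef]
  calc 2 / (T * s ^ 2) * _ ≤ 2 / (T * s ^ 2) * 4 := by gcongr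
    _ = 8 / (T * s ^ 2) := by ring

lemma norm_neg (T s : ℝ) : ‖tentFourier T (-s)‖ = ‖tentFourier T s‖ := by
  have : tentFourier T (-s) = conj (tentFourier T s) := by
    rw [tentFourier, tentFourier, ← integral_conj]
    congr 1 with t
    rw [map_mul, ← exp_conj, conj_ofReal]
    congr 2
    simp
  rw [this, RCLike.norm_conj]

end tentFourier

lemma sum_inv_sq_sub_le_one (y : ℝ) (L : Finset ℤ) (hL : ∀ l ∈ L, y + 2 < l) :
    ∑ l ∈ L, (((l : ℝ) - y) ^ 2)⁻¹ ≤ 1 := by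
  -- `l ↦ l + ⌊-y⌋` maps `L` injectively to integers `≥ 2`, where `∑ 1 / i² ≤ 1`.
  set f : ℤ → ℕ := fun l ↦ (l + ⌊-y⌋).toNat
  have hf : ∀ l ∈ L, 2 ≤ l + ⌊-y⌋ ∧ ((l + ⌊-y⌋ : ℤ) : ℝ) ≤ l - y := fun l hl ↦ by
    have := hL l hl
    refine ⟨?_, by push_cast; linarith [Int.floor_le (-y)]⟩
    have : (2 : ℤ) - l ≤ ⌊-y⌋ := Int.le_floor.2 (by push_cast; linarith)
    omega
  have hfcast : ∀ l ∈ L, ((f l : ℕ) : ℝ) = ((l + ⌊-y⌋ : ℤ) : ℝ) := fun l hl ↦ by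
    simp only [f]; exact_mod_cast Int.toNat_of_nonneg (by linarith [(hf l hl).1])
  calc ∑ l ∈ L, (((l : ℝ) - y) ^ 2)⁻¹ ≤ ∑ l ∈ L, (((f l : ℕ) : ℝ) ^ 2)⁻¹ := by
        refine sum_le_sum fun l hl ↦ ?_
        have h2 : (2 : ℝ) ≤ ((l + ⌊-y⌋ : ℤ) : ℝ) := by exact_mod_cast (hf l hl).1
        rw [hfcast l hl]
        gcongr
        exact (hf l hl).2
    _ = ∑ i ∈ L.image f, ((i : ℝ) ^ 2)⁻¹ := by
        refine (sum_image (f := fun i : ℕ ↦ ((i : ℝ) ^ 2)⁻¹) fun a ha b hb hab ↦ ?_).symm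
        have := (hf a ha).1; have := (hf b hb).1
        simp only [f] at hab; omega
    _ ≤ ∑ i ∈ Ioo 1 ((L.image f).sup id + 1), ((i : ℝ) ^ 2)⁻¹ := by
        refine sum_le_sum_of_subset_of_nonneg (fun i hi ↦ ?_) fun _ _ _ ↦ by positivity
        obtain ⟨l, hl, rfl⟩ := mem_image.1 hi
        have := (hf l hl).1
        have := le_sup (f := id) hi
        simp only [mem_Ioo, id, f] at this ⊢; omega
    _ ≤ 1 := by
        have := sum_Ioo_inv_sq_le (α := ℝ) 1 ((L.image f).sup id + 1)
        norm_num at this ⊢; exact this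

lemma sum_inv_sq_sub_le_two (x : ℝ) (L : Finset ℤ) (hL : ∀ l ∈ L, 2 < |x - l|) :
    ∑ l ∈ L, ((x - l) ^ 2)⁻¹ ≤ 2 := by
  rw [← sum_filter_add_sum_filter_not L fun l : ℤ ↦ x < l]
  have hright : ∑ l ∈ L.filter (fun l : ℤ ↦ x < l), ((x - l) ^ 2)⁻¹ ≤ 1 := by
    refine (sum_congr rfl fun l _ ↦ by rw [← neg_sub, neg_sq]).trans_le
      (sum_inv_sq_sub_le_one x _ fun l hl ↦ ?_)
    obtain ⟨hl, hxl⟩ := mem_filter.1 hl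
    have := hL l hl
    rw [abs_sub_comm, abs_of_pos (by linarith)] at this
    linarith
  have hleft : ∑ l ∈ L.filter (fun l : ℤ ↦ ¬x < l), ((x - l) ^ 2)⁻¹ ≤ 1 := by
    calc ∑ l ∈ L.filter (fun l : ℤ ↦ ¬x < l), ((x - l) ^ 2)⁻¹
        = ∑ l ∈ L.filter (fun l : ℤ ↦ ¬x < l), ((((-l : ℤ) : ℝ) - -x) ^ 2)⁻¹ :=
          sum_congr rfl fun l _ ↦ by push_cast; ring
      _ = ∑ m ∈ (L.filter (fun l : ℤ ↦ ¬x < l)).image Neg.neg, (((m : ℝ) - -x) ^ 2)⁻¹ :=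
          (sum_image (f := fun m : ℤ ↦ (((m : ℝ) - -x) ^ 2)⁻¹) fun a _ b _ h ↦ neg_inj.1 h).symm
      _ ≤ 1 := sum_inv_sq_sub_le_one (-x) _ fun m hm ↦ by
          obtain ⟨l, hl, rfl⟩ := mem_image.1 hm
          obtain ⟨hl, hxl⟩ := mem_filter.1 hl
          have := hL l hl
          rw [abs_of_nonneg (by linarith)] at this
          push_cast; linarith
  linarith

lemma card_filter_abs_sub_le_two_le_five (x : ℝ) (L : Finset ℤ) :
    #(L.filter fun l : ℤ ↦ |x - l| ≤ 2) ≤ 5 := by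
  have hsub : L.filter (fun l : ℤ ↦ |x - l| ≤ 2) ⊆ Icc ⌈x - 2⌉ ⌊x + 2⌋ := fun l hl ↦ by
    have := abs_le.1 (mem_filter.1 hl).2
    rw [mem_Icc, Int.ceil_le, Int.le_floor]
    constructor <;> linarith
  have hlen : ⌊x + 2⌋ + 1 - ⌈x - 2⌉ ≤ 5 := by
    have : ((⌊x + 2⌋ + 1 - ⌈x - 2⌉ : ℤ) : ℝ) ≤ 5 := by
      push_cast; linarith [Int.floor_le (x + 2), Int.le_ceil (x - 2)]
    exact_mod_cast this
  have := card_le_card hsub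
  rw [Int.card_Icc] at this
  omega

noncomputable def tentMajorant (T s : ℝ) : ℝ := if |s| ≤ 2 then 4 * T else 32 / (T * s ^ 2)

section

variable {T : ℝ}

lemma tentMajorant_nonneg (hT : 0 < T) (s : ℝ) : 0 ≤ tentMajorant T s := by
  unfold tentMajorant; split_ifs <;> positivity

lemma sum_tentMajorant_le (hT : 0 < T) (x : ℝ) (L : Finset ℤ) :
    ∑ l ∈ L, tentMajorant T (x - l) ≤ 20 * T + 64 / T := by
  have hnear : ∑ l ∈ L.filter (fun l : ℤ ↦ |x - l| ≤ 2), 4 * T ≤ 20 * T := by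
    rw [sum_const, nsmul_eq_mul]
    have : (#(L.filter fun l : ℤ ↦ |x - l| ≤ 2) : ℝ) ≤ 5 := by
      exact_mod_cast card_filter_abs_sub_le_two_le_five x L
    nlinarith
  have hfar : ∑ l ∈ L.filter (fun l : ℤ ↦ ¬|x - l| ≤ 2), 32 / (T * (x - l) ^ 2) ≤ 64 / T := by
    calc _ = 32 / T * ∑ l ∈ L.filter (fun l : ℤ ↦ ¬|x - l| ≤ 2), ((x - l) ^ 2)⁻¹ := by
          rw [mul_sum]; exact sum_congr rfl fun l _ ↦ by field_simp
      _ ≤ 32 / T * 2 := by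
          gcongr
          exact sum_inv_sq_sub_le_two x _ fun l hl ↦ not_le.1 (mem_filter.1 hl).2
      _ = 64 / T := by ring
  unfold tentMajorant
  rw [sum_ite]
  linarith

lemma norm_tentFourier_le_tentMajorant (hT : 0 < T) (x μ : ℝ) :
    ‖tentFourier T (x - μ)‖ ≤ tentMajorant T (x - round μ) := by
  unfold tentMajorant
  split_ifs with hnear
  · exact tentFourier.norm_le hT _
  have hhalf : |x - round μ| ≤ 2 * |x - μ| := by
    linarith [abs_sub_le x μ (round μ), abs_sub_round μ]
  have hsq : (x - round μ) ^ 2 ≤ 4 * (x - μ) ^ 2 := by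
    rw [← sq_abs, ← sq_abs (x - μ)]; nlinarith [abs_nonneg (x - round μ)]
  have hr : 0 < (x - round μ) ^ 2 := by rw [← sq_abs]; exact pow_pos (by linarith) 2
  have hμ : 0 < (x - μ) ^ 2 := by rw [← sq_abs]; exact pow_pos (by linarith) 2
  refine (tentFourier.norm_le_div_sq hT fun h ↦ by simp [h] at hμ).trans ?_
  rw [div_le_div_iff₀ (by positivity) (by positivity)]
  nlinarith [mul_le_mul_of_nonneg_left hsq hT.le]

lemma sum_norm_tentFourier_le (hT : 0 < T) {ι : Type*} (K : Finset ι) (μ : ι → ℝ) {M : ℝ}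
    (hM : ∀ l : ℤ, (#(K.filter fun k ↦ |μ k - l| ≤ 1 / 2) : ℝ) ≤ M) (x : ℝ) :
    ∑ k ∈ K, ‖tentFourier T (x - μ k)‖ ≤ M * (20 * T + 64 / T) := by
  have hM0 : 0 ≤ M := (Nat.cast_nonneg _).trans (hM 0)
  have hfiber : ∀ l : ℤ, (#(K.filter fun k ↦ round (μ k) = l) : ℝ) ≤ M := fun l ↦
    (Nat.cast_le.2 (card_le_card (monotone_filter_right K fun k _ hk ↦
      hk ▸ abs_sub_round (μ k)))).trans (hM l)
  calc ∑ k ∈ K, ‖tentFourier T (x - μ k)‖ ≤ ∑ k ∈ K, tentMajorant T (x - round (μ k)) :=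
        sum_le_sum fun k _ ↦ norm_tentFourier_le_tentMajorant hT x (μ k)
    _ = ∑ l ∈ K.image (round ∘ μ), #(K.filter fun k ↦ round (μ k) = l) • tentMajorant T (x - l) :=
        sum_comp (fun l : ℤ ↦ tentMajorant T (x - l)) (round ∘ μ)
    _ ≤ ∑ l ∈ K.image (round ∘ μ), M * tentMajorant T (x - l) := by
        refine sum_le_sum fun l _ ↦ ?_
        rw [nsmul_eq_mul]
        exact mul_le_mul_of_nonneg_right (hfiber l) (tentMajorant_nonneg hT _)
    _ ≤ M * (20 * T + 64 / T) := by
        rw [← mul_sum]; exact mul_le_mul_of_nonneg_left (sum_tentMajorant_le hT x _) hM0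

lemma sum_sum_mul_mul_le_of_sum_le {ι : Type*} (K : Finset ι) (a : ι → ℝ) (W : ι → ι → ℝ)
    {R : ℝ} (hW : ∀ i j, 0 ≤ W i j) (hrow : ∀ i ∈ K, ∑ j ∈ K, W i j ≤ R)
    (hcol : ∀ j ∈ K, ∑ i ∈ K, W i j ≤ R) :
    ∑ i ∈ K, ∑ j ∈ K, a i * a j * W i j ≤ R * ∑ i ∈ K, a i ^ 2 := by
  have hrow' : ∑ i ∈ K, ∑ j ∈ K, a i ^ 2 / 2 * W i j ≤ R / 2 * ∑ i ∈ K, a i ^ 2 := by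
    rw [mul_sum]
    refine sum_le_sum fun i hi ↦ ?_
    rw [← mul_sum]
    nlinarith [hrow i hi, sq_nonneg (a i)]
  have hcol' : ∑ i ∈ K, ∑ j ∈ K, a j ^ 2 / 2 * W i j ≤ R / 2 * ∑ j ∈ K, a j ^ 2 := by
    rw [sum_comm, mul_sum]
    refine sum_le_sum fun j hj ↦ ?_
    rw [← mul_sum]
    nlinarith [hcol j hj, sq_nonneg (a j)]
  calc ∑ i ∈ K, ∑ j ∈ K, a i * a j * W i j
      ≤ ∑ i ∈ K, ∑ j ∈ K, (a i ^ 2 / 2 * W i j + a j ^ 2 / 2 * W i j) :=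
        sum_le_sum fun i _ ↦ sum_le_sum fun j _ ↦ by
          nlinarith [hW i j, mul_nonneg (sq_nonneg (a i - a j)) (hW i j)]
    _ ≤ R * ∑ i ∈ K, a i ^ 2 := by
        simp only [sum_add_distrib]; linarith

lemma setIntegral_Ioc_le_integral_tent_mul (hT : 0 < T) {g : ℝ → ℝ} (hg : Continuous g)
    (hg0 : ∀ t, 0 ≤ g t) : ∫ t in Set.Ioc 0 T, g t ≤ ∫ t, tent T t * g t := by
  have hint : Integrable fun t ↦ tent T t * g t :=
    ((tent.continuous T).mul hg).integrable_of_hasCompactSupport (tent.hasCompactSupport hT).mul_right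
  calc ∫ t in Set.Ioc 0 T, g t ≤ ∫ t in Set.Ioc 0 T, tent T t * g t :=
        setIntegral_mono_on (hg.integrableOn_Icc.mono_set Set.Ioc_subset_Icc_self)
          hint.integrableOn measurableSet_Ioc fun t ht ↦
            le_mul_of_one_le_left (hg0 t) (tent.one_le hT (Set.Ioc_subset_Icc_self ht))
    _ ≤ ∫ t, tent T t * g t :=
        setIntegral_le_integral hint (.of_forall fun t ↦ mul_nonneg (tent.nonneg T t) (hg0 t))

lemma exp_mul_conj_exp (a b t : ℝ) :
    exp (I * a * t) * conj (exp (I * b * t)) = exp (I * (a - b : ℝ) * t) := by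
  rw [← exp_conj, ← exp_add]
  congr 1
  simp only [map_mul, conj_I, conj_ofReal]
  push_cast; ring

lemma ofReal_norm_sum_exp_sq {ι : Type*} (K : Finset ι) (d : ι → ℂ) (μ : ι → ℝ) (t : ℝ) :
    ((‖∑ k ∈ K, d k * exp (I * μ k * t)‖ ^ 2 : ℝ) : ℂ) =
      ∑ k ∈ K, ∑ k' ∈ K, d k * conj (d k') * exp (I * (μ k - μ k' : ℝ) * t) := by
  rw [ofReal_pow, ← mul_conj', map_sum, sum_mul_sum]
  refine sum_congr rfl fun k _ ↦ sum_congr rfl fun k' _ ↦ ?_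
  rw [← exp_mul_conj_exp, map_mul]; ring

lemma ofReal_integral_tent_mul_norm_sum_exp_sq (hT : 0 < T) {ι : Type*} (K : Finset ι)
    (d : ι → ℂ) (μ : ι → ℝ) :
    ((∫ t, tent T t * ‖∑ k ∈ K, d k * exp (I * μ k * t)‖ ^ 2 : ℝ) : ℂ) =
      ∑ k ∈ K, ∑ k' ∈ K, d k * conj (d k') * tentFourier T (μ k - μ k') := by
  have hexpand : ∀ t : ℝ, ((tent T t * ‖∑ k ∈ K, d k * exp (I * μ k * t)‖ ^ 2 : ℝ) : ℂ) =
      ∑ k ∈ K, ∑ k' ∈ K, d k * conj (d k') * ((tent T t : ℂ) * exp (I * (μ k - μ k' : ℝ) * t)) := by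
    intro t
    rw [ofReal_mul, ofReal_norm_sum_exp_sq, mul_sum]
    exact sum_congr rfl fun k _ ↦ by rw [mul_sum]; exact sum_congr rfl fun k' _ ↦ by ring
  rw [← integral_complex_ofReal, integral_congr_ae (.of_forall hexpand), integral_finsetSum _
    fun k _ ↦ integrable_finsetSum _ fun k' _ ↦ (tentFourier.integrable hT _).const_mul _]
  refine sum_congr rfl fun k _ ↦ ?_
  rw [integral_finsetSum _ fun k' _ ↦ (tentFourier.integrable hT _).const_mul _]
  exact sum_congr rfl fun k' _ ↦ integral_const_mul _ _

lemma setIntegral_norm_sum_exp_sq_le (hT : 0 < T) {ι : Type*} (K : Finset ι) (d : ι → ℂ)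
    (μ : ι → ℝ) {M : ℝ} (hM : ∀ l : ℤ, (#(K.filter fun k ↦ |μ k - l| ≤ 1 / 2) : ℝ) ≤ M) :
    ∫ t in Set.Ioc 0 T, ‖∑ k ∈ K, d k * exp (I * μ k * t)‖ ^ 2 ≤
      (20 * T + 64 / T) * M * ∑ k ∈ K, ‖d k‖ ^ 2 := by
  have hrow : ∀ k ∈ K, ∑ k' ∈ K, ‖tentFourier T (μ k - μ k')‖ ≤ M * (20 * T + 64 / T) :=
    fun k _ ↦ sum_norm_tentFourier_le hT K μ hM (μ k)
  have hcol : ∀ k' ∈ K, ∑ k ∈ K, ‖tentFourier T (μ k - μ k')‖ ≤ M * (20 * T + 64 / T) :=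
    fun k' _ ↦ by
      simpa only [← tentFourier.norm_neg T (μ _ - μ k'), neg_sub] using
        sum_norm_tentFourier_le hT K μ hM (μ k')
  calc ∫ t in Set.Ioc 0 T, ‖∑ k ∈ K, d k * exp (I * μ k * t)‖ ^ 2
      ≤ ∫ t, tent T t * ‖∑ k ∈ K, d k * exp (I * μ k * t)‖ ^ 2 :=
        setIntegral_Ioc_le_integral_tent_mul hT (by fun_prop) fun t ↦ by positivity
    _ ≤ ‖∑ k ∈ K, ∑ k' ∈ K, d k * conj (d k') * tentFourier T (μ k - μ k')‖ := by
        rw [← ofReal_integral_tent_mul_norm_sum_exp_sq hT, norm_real]; exact Real.le_norm_self _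
    _ ≤ ∑ k ∈ K, ∑ k' ∈ K, ‖d k‖ * ‖d k'‖ * ‖tentFourier T (μ k - μ k')‖ :=
        (norm_sum_le _ _).trans <| sum_le_sum fun k _ ↦ (norm_sum_le _ _).trans_eq <|
          sum_congr rfl fun k' _ ↦ by rw [norm_mul, norm_mul, RCLike.norm_conj]
    _ ≤ M * (20 * T + 64 / T) * ∑ k ∈ K, ‖d k‖ ^ 2 :=
        sum_sum_mul_mul_le_of_sum_le K _ _ (fun _ _ ↦ norm_nonneg _) hrow hcol
    _ = (20 * T + 64 / T) * M * ∑ k ∈ K, ‖d k‖ ^ 2 := by ring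

end

lemma integral_exp_int_mul (m : ℤ) :
    ∫ x in Set.Ioc 0 (2 * Real.pi), exp (I * m * x) =
      if m = 0 then ((2 * Real.pi : ℝ) : ℂ) else 0 := by
  rw [← intervalIntegral.integral_of_le Real.two_pi_pos.le]
  split_ifs with hm
  · simp [hm]
  have hc : I * m ≠ 0 := mul_ne_zero I_ne_zero (Int.cast_ne_zero.2 hm)
  have hperiod : exp (I * m * (2 * Real.pi : ℝ)) = 1 := by
    rw [← exp_int_mul_two_pi_mul_I m]; push_cast; ring_nf
  rw [integral_exp_mul_complex hc, hperiod]
  simp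

lemma integral_norm_sum_exp_sq (S : Finset ℤ) (b : ℤ → ℂ) :
    ∫ x in Set.Ioc 0 (2 * Real.pi), ‖∑ n ∈ S, b n * exp (I * n * x)‖ ^ 2 =
      2 * Real.pi * ∑ n ∈ S, ‖b n‖ ^ 2 := by
  apply ofReal_injective
  have hint : ∀ m : ℤ, IntegrableOn (fun x : ℝ ↦ exp (I * m * x)) (Set.Ioc 0 (2 * Real.pi)) :=
    fun m ↦ (by fun_prop : Continuous fun x : ℝ ↦ exp (I * m * x)).integrableOn_Ioc
  have hfreq : ∀ k k' : ℤ, (((k : ℝ) - k' : ℝ) : ℂ) = ((k - k' : ℤ) : ℂ) := by push_cast; simp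
  rw [← integral_complex_ofReal]
  simp_rw [← ofReal_intCast, ofReal_norm_sum_exp_sq, hfreq]
  rw [integral_finsetSum _ fun n _ ↦ integrable_finsetSum _ fun m _ ↦ (hint _).const_mul _]
  simp_rw [integral_finsetSum _ fun m _ ↦ (hint _).const_mul _, integral_const_mul,
    integral_exp_int_mul, sub_eq_zero, mul_ite, mul_zero, sum_ite_eq, mul_conj']
  push_cast
  rw [mul_sum]
  exact sum_congr rfl fun n hn ↦ by rw [if_pos hn]; ring

lemma integral_norm_sum_exp_sq_fiberwise {ι : Type*} (P : Finset ι) (g : ι → ℂ) (ν : ι → ℤ) :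
    ∫ x in Set.Ioc 0 (2 * Real.pi), ‖∑ i ∈ P, g i * exp (I * ν i * x)‖ ^ 2 =
      2 * Real.pi * ∑ a ∈ P.image ν, ‖∑ i ∈ P with ν i = a, g i‖ ^ 2 := by
  have hfiber : ∀ x : ℝ, ∑ i ∈ P, g i * exp (I * ν i * x) =
      ∑ a ∈ P.image ν, (∑ i ∈ P with ν i = a, g i) * exp (I * a * x) := fun x ↦ by
    rw [← sum_fiberwise_of_maps_to fun i hi ↦ mem_image_of_mem ν hi]
    refine sum_congr rfl fun a _ ↦ ?_
    rw [sum_mul]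
    exact sum_congr rfl fun i hi ↦ by rw [(mem_filter.1 hi).2]
  simp_rw [hfiber]
  exact integral_norm_sum_exp_sq _ _

lemma sq_sum_exp (S : Finset ℤ) (c : ℤ → ℂ) (ω : ℤ → ℝ) (t x : ℝ) :
    (∑ n ∈ S, c n * exp (I * (n * x + ω n * t))) ^ 2 =
      ∑ p ∈ S ×ˢ S, c p.1 * c p.2 * exp (I * (ω p.1 + ω p.2 : ℝ) * t) *
        exp (I * (p.1 + p.2 : ℤ) * x) := by
  rw [sq, sum_mul_sum, sum_product]
  refine sum_congr rfl fun n _ ↦ sum_congr rfl fun m _ ↦ ?_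
  rw [mul_mul_mul_comm, mul_assoc (c n * c m), ← exp_add, ← exp_add]
  push_cast; ring_nf

lemma setIntegral_integral_norm_sum_exp_pow_four_le {T : ℝ} (hT : 0 < T) (S : Finset ℤ)
    (c : ℤ → ℂ) (ω : ℤ → ℝ) {M : ℝ}
    (hM : ∀ a l : ℤ, (#(((S ×ˢ S).filter fun p ↦ p.1 + p.2 = a).filter
      fun p ↦ |ω p.1 + ω p.2 - l| ≤ 1 / 2) : ℝ) ≤ M) :
    ∫ t in Set.Ioc 0 T, ∫ x in Set.Ioc 0 (2 * Real.pi),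
        ‖∑ n ∈ S, c n * exp (I * (n * x + ω n * t))‖ ^ 4 ≤
      2 * Real.pi * (20 * T + 64 / T) * M * (∑ n ∈ S, ‖c n‖ ^ 2) ^ 2 := by
  set B : ℤ → ℝ → ℂ := fun a t ↦ ∑ p ∈ S ×ˢ S with p.1 + p.2 = a,
    c p.1 * c p.2 * exp (I * (ω p.1 + ω p.2 : ℝ) * t)
  have hinner : ∀ t : ℝ, ∫ x in Set.Ioc 0 (2 * Real.pi),
      ‖∑ n ∈ S, c n * exp (I * (n * x + ω n * t))‖ ^ 4 =
        2 * Real.pi * ∑ a ∈ (S ×ˢ S).image (fun p ↦ p.1 + p.2), ‖B a t‖ ^ 2 := fun t ↦ by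
    have h4 : ∀ z : ℂ, ‖z‖ ^ 4 = ‖z ^ 2‖ ^ 2 := fun z ↦ by rw [norm_pow, ← pow_mul]
    simp only [h4, sq_sum_exp]
    exact integral_norm_sum_exp_sq_fiberwise (S ×ˢ S) _ (fun p ↦ p.1 + p.2)
  have hfiber_bound : ∀ a, ∫ t in Set.Ioc 0 T, ‖B a t‖ ^ 2 ≤
      (20 * T + 64 / T) * M * ∑ p ∈ S ×ˢ S with p.1 + p.2 = a, ‖c p.1 * c p.2‖ ^ 2 := fun a ↦
    setIntegral_norm_sum_exp_sq_le hT ((S ×ˢ S).filter fun p ↦ p.1 + p.2 = a)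
      (fun p ↦ c p.1 * c p.2) (fun p ↦ ω p.1 + ω p.2) (hM a)
  have hfibers : ∑ a ∈ (S ×ˢ S).image (fun p ↦ p.1 + p.2),
      ∑ p ∈ S ×ˢ S with p.1 + p.2 = a, ‖c p.1 * c p.2‖ ^ 2 = (∑ n ∈ S, ‖c n‖ ^ 2) ^ 2 := by
    rw [sum_fiberwise_of_maps_to fun p hp ↦ mem_image_of_mem _ hp, sq, sum_mul_sum, sum_product]
    simp only [norm_mul, mul_pow]
  calc _ = 2 * Real.pi * ∑ a ∈ (S ×ˢ S).image (fun p ↦ p.1 + p.2),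
          ∫ t in Set.Ioc 0 T, ‖B a t‖ ^ 2 := by
        rw [setIntegral_congr_fun measurableSet_Ioc fun t _ ↦ hinner t, integral_const_mul,
          integral_finsetSum _ fun a _ ↦
            (by fun_prop : Continuous fun t ↦ ‖B a t‖ ^ 2).integrableOn_Ioc]
    _ ≤ 2 * Real.pi * ∑ a ∈ (S ×ˢ S).image (fun p ↦ p.1 + p.2),
          (20 * T + 64 / T) * M * ∑ p ∈ S ×ˢ S with p.1 + p.2 = a, ‖c p.1 * c p.2‖ ^ 2 := by
        gcongr with a; exact hfiber_bound a
    _ = 2 * Real.pi * (20 * T + 64 / T) * M * (∑ n ∈ S, ‖c n‖ ^ 2) ^ 2 := by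
        rw [← mul_sum, hfibers]; ring

def resonantSet (α N : ℝ) (a l : ℤ) : Set ℤ :=
  {k : ℤ | N ≤ |(k : ℝ)| ∧ |(k : ℝ)| ≤ 2 * N ∧ N ≤ |(a : ℝ) - (k : ℝ)| ∧
    |(a : ℝ) - (k : ℝ)| ≤ 2 * N ∧ |(|(k : ℝ)| ^ α + |(a : ℝ) - (k : ℝ)| ^ α - (l : ℝ))| ≤ 1 / 2}

lemma resonantSet_subset_Icc (α N : ℝ) (a l : ℤ) :
    resonantSet α N a l ⊆ Set.Icc (-⌈2 * N⌉) ⌈2 * N⌉ := fun k hk ↦ by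
  have := abs_le.1 hk.2.1
  have := Int.le_ceil (2 * N)
  constructor
  · have : ((-⌈2 * N⌉ : ℤ) : ℝ) ≤ k := by push_cast; linarith
    exact_mod_cast this
  · have : (k : ℝ) ≤ ⌈2 * N⌉ := by linarith
    exact_mod_cast this

lemma ncard_resonantSet_le_iSup (α N : ℝ) (a l : ℤ) :
    ((resonantSet α N a l).ncard : ℝ) ≤ ⨆ a : ℤ, ⨆ l : ℤ, ((resonantSet α N a l).ncard : ℝ) := by
  refine le_ciSup₂ (f := fun a l ↦ ((resonantSet α N a l).ncard : ℝ))
    ⟨(Set.Icc (-⌈2 * N⌉) ⌈2 * N⌉).ncard, ?_⟩ a l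
  rintro _ ⟨_, ⟨a, rfl⟩, ⟨l, rfl⟩⟩
  dsimp only
  exact_mod_cast Set.ncard_le_ncard (resonantSet_subset_Icc α N a l) (Set.finite_Icc _ _)

lemma card_filter_fiber_le_ncard_resonantSet (α N : ℝ) (S : Finset ℤ)
    (hS : ∀ n ∈ S, N ≤ |(n : ℝ)| ∧ |(n : ℝ)| ≤ 2 * N) (a l : ℤ) :
    #(((S ×ˢ S).filter fun p ↦ p.1 + p.2 = a).filter
      fun p ↦ |(|(p.1 : ℝ)| ^ α + |(p.2 : ℝ)| ^ α) - l| ≤ 1 / 2) ≤ (resonantSet α N a l).ncard := by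
  rw [← Set.ncard_coe_finset]
  refine Set.ncard_le_ncard_of_injOn Prod.fst (fun p hp ↦ ?_) (fun p hp q hq hpq ↦ ?_)
    ((Set.finite_Icc _ _).subset (resonantSet_subset_Icc α N a l))
  · rw [mem_coe, mem_filter, mem_filter, mem_product] at hp
    obtain ⟨⟨⟨h1, h2⟩, hsum⟩, hres⟩ := hp
    have hcast : (p.2 : ℝ) = a - p.1 := by rw [← hsum]; push_cast; ring
    have h2 := hS _ h2
    rw [hcast] at h2 hres
    exact ⟨(hS _ h1).1, (hS _ h1).2, h2.1, h2.2, hres⟩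
  · rw [mem_coe, mem_filter, mem_filter] at hp hq
    exact Prod.ext hpq (by omega)

theorem L4_strichartz_counting_general (α T : ℝ) (hT : 0 < T) :
    ∃ C > 0, ∀ (N : ℝ), 1 ≤ N → ∀ c : ℤ → ℂ, (Function.support c).Finite →
      (∀ n : ℤ, c n ≠ 0 → N ≤ |(n : ℝ)| ∧ |(n : ℝ)| ≤ 2 * N) →
      (∫ t in Set.Ioc (0 : ℝ) T, ∫ x in Set.Ioc (0 : ℝ) (2 * Real.pi),
          ‖∑' n : ℤ, c n *
              Complex.exp (Complex.I * ((n : ℂ) * (x : ℂ) + ((|(n : ℝ)| ^ α : ℝ) : ℂ) * (t : ℂ)))‖ ^ 4)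
          ^ ((1 : ℝ) / 2)
        ≤ C * (⨆ a : ℤ, ⨆ l : ℤ,
              (({k : ℤ | N ≤ |(k : ℝ)| ∧ |(k : ℝ)| ≤ 2 * N ∧
                  N ≤ |(a : ℝ) - (k : ℝ)| ∧ |(a : ℝ) - (k : ℝ)| ≤ 2 * N ∧
                  |(|(k : ℝ)| ^ α + |(a : ℝ) - (k : ℝ)| ^ α - (l : ℝ))| ≤ 1 / 2}.ncard : ℝ)))
            ^ ((1 : ℝ) / 2)
          * ∑' n : ℤ, ‖c n‖ ^ 2 := by
  refine ⟨(2 * Real.pi * (20 * T + 64 / T)) ^ ((1 : ℝ) / 2), by positivity, fun N _ c hc hsupp ↦ ?_⟩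
  set S := hc.toFinset
  have hcS : Function.support c ⊆ S := hc.coe_toFinset.ge
  have hu : ∀ t x : ℝ, ∑' n : ℤ, c n * exp (I * (n * x + (|(n : ℝ)| ^ α : ℝ) * t)) =
      ∑ n ∈ S, c n * exp (I * (n * x + (|(n : ℝ)| ^ α : ℝ) * t)) :=
    fun t x ↦ tsum_eq_sum' ((Function.support_mul_subset_left _ _).trans hcS)
  rw [tsum_eq_sum' (s := S) fun n hn ↦ hcS (by simpa using hn)]
  simp only [hu]
  change _ ≤ _ * (⨆ a : ℤ, ⨆ l : ℤ, ((resonantSet α N a l).ncard : ℝ)) ^ _ * _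
  set M := ⨆ a : ℤ, ⨆ l : ℤ, ((resonantSet α N a l).ncard : ℝ)
  have hM : ∀ a l : ℤ, _ ≤ M := fun a l ↦
    (Nat.cast_le.2 (card_filter_fiber_le_ncard_resonantSet α N S
      (fun n hn ↦ hsupp n (hc.mem_toFinset.1 hn)) a l)).trans (ncard_resonantSet_le_iSup α N a l)
  have hM0 : 0 ≤ M := (Nat.cast_nonneg _).trans (ncard_resonantSet_le_iSup α N 0 0)
  calc _ ≤ (2 * Real.pi * (20 * T + 64 / T) * M * (∑ n ∈ S, ‖c n‖ ^ 2) ^ 2) ^ ((1 : ℝ) / 2) :=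
        Real.rpow_le_rpow (integral_nonneg fun t ↦ integral_nonneg fun x ↦ by positivity)
          (setIntegral_integral_norm_sum_exp_pow_four_le hT S c (fun n ↦ |(n : ℝ)| ^ α) hM)
          (by norm_num)
    _ = _ := by
        rw [Real.mul_rpow (by positivity) (by positivity), Real.mul_rpow (by positivity) hM0,
          ← Real.sqrt_eq_rpow ((∑ n ∈ S, ‖c n‖ ^ 2) ^ 2), Real.sqrt_sq (by positivity)]

/-- Reduction of the `L⁴` Strichartz estimate to a counting bound. -/
theorem L4_strichartz_counting (α T : ℝ) (hα₁ : 1 < α) (hα₂ : α ≤ 2) (hT : 0 < T) :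
    ∃ C > 0, ∀ (N : ℝ), 1 ≤ N → ∀ c : ℤ → ℂ, (Function.support c).Finite →
      (∀ n : ℤ, c n ≠ 0 → N ≤ |(n : ℝ)| ∧ |(n : ℝ)| ≤ 2 * N) →
      (∫ t in Set.Ioc (0 : ℝ) T, ∫ x in Set.Ioc (0 : ℝ) (2 * Real.pi),
          ‖∑' n : ℤ, c n *
              Complex.exp (Complex.I * ((n : ℂ) * (x : ℂ) + ((|(n : ℝ)| ^ α : ℝ) : ℂ) * (t : ℂ)))‖ ^ 4)
          ^ ((1 : ℝ) / 2)
        ≤ C * (⨆ a : ℤ, ⨆ l : ℤ,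
              (({k : ℤ | N ≤ |(k : ℝ)| ∧ |(k : ℝ)| ≤ 2 * N ∧
                  N ≤ |(a : ℝ) - (k : ℝ)| ∧ |(a : ℝ) - (k : ℝ)| ≤ 2 * N ∧
                  |(|(k : ℝ)| ^ α + |(a : ℝ) - (k : ℝ)| ^ α - (l : ℝ))| ≤ 1 / 2}.ncard : ℝ)))
            ^ ((1 : ℝ) / 2)
          * ∑' n : ℤ, ‖c n‖ ^ 2 :=
  L4_strichartz_counting_general α T hT
end

section
/- Let 1/2 < α ≤ 1. There exist constants C, c, c₀ > 0 and M₀ ≥ 1, depending only on α, such that the following holds. Let (Ω,ℱ,ℙ) be a probability space carrying families (h_n)_{n∈ℤ}, (l_n)_{n∈ℤ} of real random variables such that the combined family {h_n : n∈ℤ} ∪ {l_n : n∈ℤ} is independent and each variable has standard Gaussian law N(0,1). For integers M₀ ≤ M < N define S(ω) := ∑_{M < |n| ≤ N} (1+|n|^α)^{−1} · ((h_n(ω)² + l_n(ω)²)/2 − 1). Then for every λ > 0: if λ ≥ c₀ M^{1−α} then ℙ(|S| > λ) ≤ C exp(−c λ M^α), and if λ ≤ c₀ M^{1−α} then ℙ(|S|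 > λ) ≤ C exp(−c λ² M^{2α−1}). -/
open MeasureTheory ProbabilityTheory Real Finset
open scoped NNReal ENNReal

/-!
Write `S = ∑ₙ wₙ ((hₙ² + lₙ²) / 2 - 1)` with `wₙ = (1 + |n|^α)⁻¹`. For a standard Gaussian `X`,
`E exp (u (X² - 1) / 2) = e^{-u/2} (1 - u)^{-1/2} ≤ e^{u²}` whenever `u ≤ 1/2`, so by independence
`E exp (±t S) ≤ exp (2 t² ∑ wₙ²)` as long as `t ≤ M^α / 2`, since `wₙ ≤ M^{-α}` on the shell
`M < |n| ≤ N`. There `∑ wₙ² ≤ 2 ∑_{m > M} m^{-2α} ≤ 2 M^{1-2α} / (2α - 1)`, and Chernoff's bound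
with `t = M^α / 2`, resp. with the unconstrained optimum `t ∝ λ M^{2α-1}`, gives the two regimes.
-/

lemma exp_neg_half_mul_inv_sqrt_one_sub_le {u : ℝ} (hu : u ≤ 1 / 2) :
    exp (-u / 2) * (√(1 - u))⁻¹ ≤ exp (u ^ 2) := by
  have h1u : 0 < 1 - u := by linarith
  -- `(1 - u) e^{u + 2u²} ≥ (1 - u)(1 + u + 2u²) = 1 + u²(1 - 2u)`
  have key : 1 ≤ (1 - u) * exp (u + 2 * u ^ 2) :=
    calc (1 : ℝ) ≤ (1 - u) * (u + 2 * u ^ 2 + 1) := by nlinarith [sq_nonneg u]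
      _ ≤ (1 - u) * exp (u + 2 * u ^ 2) := by gcongr; exact add_one_le_exp _
  have hsplit :
      exp (u ^ 2) * √(1 - u) = exp (-u / 2) * √((1 - u) * exp (u + 2 * u ^ 2)) := by
    have he : exp (u ^ 2) = exp (-u / 2) * exp ((u + 2 * u ^ 2) / 2) := by
      rw [← exp_add]; ring_nf
    rw [sqrt_mul h1u.le, ← exp_half, he]
    ring
  rw [mul_inv_le_iff₀ (sqrt_pos.2 h1u), hsplit]
  exact le_mul_of_one_le_right (exp_pos _).le (one_le_sqrt.2 key)

lemma gaussianPDFReal_mul_exp_mul_sq (s x : ℝ) :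
    gaussianPDFReal 0 1 x * exp (s * x ^ 2) = (√(2 * π))⁻¹ * exp (-(1 / 2 - s) * x ^ 2) := by
  rw [gaussianPDFReal, mul_assoc, ← exp_add]
  simp only [NNReal.coe_one, mul_one, sub_zero]
  ring_nf

lemma integrable_exp_mul_sq_gaussianReal {s : ℝ} (hs : s < 1 / 2) :
    Integrable (fun x => exp (s * x ^ 2)) (gaussianReal 0 1) := by
  rw [gaussianReal_of_var_ne_zero _ one_ne_zero, integrable_withDensity_iff_integrable_smul'
    (measurable_gaussianPDF 0 1) (ae_of_all _ fun _ => gaussianPDF_lt_top)]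
  simp_rw [toReal_gaussianPDF, smul_eq_mul, gaussianPDFReal_mul_exp_mul_sq]
  exact (integrable_exp_neg_mul_sq (by linarith)).const_mul _

lemma integral_exp_mul_sq_gaussianReal {s : ℝ} (hs : s < 1 / 2) :
    ∫ x, exp (s * x ^ 2) ∂gaussianReal 0 1 = (√(1 - 2 * s))⁻¹ := by
  simp_rw [integral_gaussianReal_eq_integral_smul one_ne_zero, smul_eq_mul,
    gaussianPDFReal_mul_exp_mul_sq, integral_const_mul, integral_gaussian]
  have hs' : 0 < 1 / 2 - s := by linarith
  rw [sqrt_div pi_pos.le, sqrt_mul zero_le_two, show 1 - 2 * s = 2 * (1 / 2 - s) by ring,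
    sqrt_mul zero_le_two]
  field_simp

lemma exp_mul_mul_sq_sub_one_div_two (b t x : ℝ) :
    exp (t * (b * (x ^ 2 - 1) / 2)) = exp (-(t * b) / 2) * exp (t * b / 2 * x ^ 2) := by
  rw [← exp_add]; ring_nf

lemma mgf_mul_sq_sub_one_gaussianReal {b t : ℝ} (h : t * b < 1) :
    mgf (fun x => b * (x ^ 2 - 1) / 2) (gaussianReal 0 1) t
      = exp (-(t * b) / 2) * (√(1 - t * b))⁻¹ := by
  simp_rw [mgf, exp_mul_mul_sq_sub_one_div_two, integral_const_mul,
    integral_exp_mul_sq_gaussianReal (s := t * b / 2) (by linarith)]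
  ring_nf

lemma integrable_exp_mul_mul_sq_sub_one_gaussianReal {b t : ℝ} (h : t * b < 1) :
    Integrable (fun x => exp (t * (b * (x ^ 2 - 1) / 2))) (gaussianReal 0 1) := by
  simp_rw [exp_mul_mul_sq_sub_one_div_two]
  exact (integrable_exp_mul_sq_gaussianReal (by linarith)).const_mul _

section Chernoff

variable {Ω : Type*} [MeasurableSpace Ω] {P : Measure Ω}

lemma integrable_exp_mul_mul_sq_sub_one {X : Ω → ℝ} (hX : Measurable X)
    (hlaw : P.map X = gaussianReal 0 1) {b t : ℝ} (h : t * b < 1) :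
    Integrable (fun ω => exp (t * (b * (X ω ^ 2 - 1) / 2))) P := by
  have hint := integrable_exp_mul_mul_sq_sub_one_gaussianReal h
  rw [← hlaw, integrable_map_measure (by fun_prop) hX.aemeasurable] at hint
  exact hint

lemma mgf_mul_sq_sub_one_le {X : Ω → ℝ} (hX : Measurable X)
    (hlaw : P.map X = gaussianReal 0 1) {b t : ℝ} (h : t * b ≤ 1 / 2) :
    mgf (fun ω => b * (X ω ^ 2 - 1) / 2) P t ≤ exp ((t * b) ^ 2) := by
  have hmgf := mgf_mul_sq_sub_one_gaussianReal (b := b) (t := t) (by linarith)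
  rw [← hlaw, mgf_map hX.aemeasurable (by fun_prop), Function.comp_def] at hmgf
  rw [hmgf]
  exact exp_neg_half_mul_inv_sqrt_one_sub_le h

lemma iIndepFun.measureReal_le_sum_le {ι : Type*} {Y : ι → Ω → ℝ} (hindep : iIndepFun Y P)
    (hY : ∀ i, Measurable (Y i)) {s : Finset ι} {t : ℝ} (ht : 0 ≤ t) {v : ι → ℝ}
    (hint : ∀ i ∈ s, Integrable (fun ω => exp (t * Y i ω)) P)
    (hmgf : ∀ i ∈ s, mgf (Y i) P t ≤ exp (v i)) (lam : ℝ) :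
    P.real {ω | lam ≤ ∑ i ∈ s, Y i ω} ≤ exp (-t * lam + ∑ i ∈ s, v i) := by
  have := hindep.isProbabilityMeasure
  have hchernoff := measure_ge_le_exp_mul_mgf lam ht (hindep.integrable_exp_mul_sum hY hint)
  simp only [Finset.sum_apply, hindep.mgf_sum hY] at hchernoff
  calc P.real {ω | lam ≤ ∑ i ∈ s, Y i ω}
      ≤ exp (-t * lam) * ∏ i ∈ s, mgf (Y i) P t := hchernoff
    _ ≤ exp (-t * lam) * ∏ i ∈ s, exp (v i) := by
      gcongr with i hi
      · exact fun i _ => mgf_nonneg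
      · exact hmgf i hi
    _ = exp (-t * lam + ∑ i ∈ s, v i) := by rw [← exp_sum, exp_add]

variable {ι : Type*} {Z : ι → Ω → ℝ}

lemma measureReal_le_sum_mul_sq_sub_one_le (hindep : iIndepFun Z P) (hZ : ∀ i, Measurable (Z i))
    (hlaw : ∀ i, P.map (Z i) = gaussianReal 0 1) {s : Finset ι} {c : ι → ℝ} {t : ℝ} (ht : 0 ≤ t)
    (hc : ∀ i ∈ s, t * c i ≤ 1 / 2) (lam : ℝ) :
    P.real {ω | lam ≤ ∑ i ∈ s, c i * (Z i ω ^ 2 - 1) / 2}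
      ≤ exp (-t * lam + t ^ 2 * ∑ i ∈ s, c i ^ 2) := by
  have hbound := iIndepFun.measureReal_le_sum_le
    (hindep.comp (fun i x => c i * (x ^ 2 - 1) / 2) (fun i => by fun_prop))
    (fun i => by fun_prop) ht (v := fun i => (t * c i) ^ 2)
    (fun i hi => integrable_exp_mul_mul_sq_sub_one (hZ i) (hlaw i) (by linarith [hc i hi]))
    (fun i hi => mgf_mul_sq_sub_one_le (hZ i) (hlaw i) (hc i hi)) lam
  simpa only [Function.comp_apply, mul_pow, ← mul_sum] using hbound

lemma measureReal_lt_abs_sum_mul_sq_sub_one_le (hindep : iIndepFun Z P)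
    (hZ : ∀ i, Measurable (Z i)) (hlaw : ∀ i, P.map (Z i) = gaussianReal 0 1) {s : Finset ι}
    {c : ι → ℝ} {t : ℝ} (ht : 0 ≤ t) (hc : ∀ i ∈ s, t * |c i| ≤ 1 / 2) (lam : ℝ) :
    P.real {ω | lam < |∑ i ∈ s, c i * (Z i ω ^ 2 - 1) / 2|}
      ≤ 2 * exp (-t * lam + t ^ 2 * ∑ i ∈ s, c i ^ 2) := by
  have := hindep.isProbabilityMeasure
  have hupper := measureReal_le_sum_mul_sq_sub_one_le hindep hZ hlaw ht
    (fun i hi => (mul_le_mul_of_nonneg_left (le_abs_self (c i)) ht).trans (hc i hi)) lam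
  have hlower := measureReal_le_sum_mul_sq_sub_one_le hindep hZ hlaw ht (c := fun i => -c i)
    (fun i hi => (mul_le_mul_of_nonneg_left (neg_le_abs (c i)) ht).trans (hc i hi)) lam
  simp only [neg_sq, neg_mul, neg_div, sum_neg_distrib] at hlower
  rw [← neg_mul] at hlower
  calc P.real {ω | lam < |∑ i ∈ s, c i * (Z i ω ^ 2 - 1) / 2|}
      ≤ P.real ({ω | lam ≤ ∑ i ∈ s, c i * (Z i ω ^ 2 - 1) / 2}
          ∪ {ω | lam ≤ -∑ i ∈ s, c i * (Z i ω ^ 2 - 1) / 2}) := by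
        refine measureReal_mono (fun ω hω => ?_)
        simp only [Set.mem_ofPred_eq, lt_abs, Set.mem_union] at hω ⊢
        exact hω.imp le_of_lt le_of_lt
    _ ≤ _ := measureReal_union_le _ _
    _ ≤ 2 * exp (-t * lam + t ^ 2 * ∑ i ∈ s, c i ^ 2) := by linarith

end Chernoff

lemma measureReal_lt_abs_sum_mul_half_sq_add_sq_sub_one_le {Ω κ : Type*} [MeasurableSpace Ω]
    {P : Measure Ω} {h l : κ → Ω → ℝ} (hh : ∀ n, Measurable (h n)) (hl : ∀ n, Measurable (l n))
    (hindep : iIndepFun (Sum.elim h l) P) (hh_law : ∀ n, P.map (h n) = gaussianReal 0 1)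
    (hl_law : ∀ n, P.map (l n) = gaussianReal 0 1) {s : Finset κ} {w : κ → ℝ} {t : ℝ}
    (ht : 0 ≤ t) (hw : ∀ n ∈ s, t * |w n| ≤ 1 / 2) (lam : ℝ) :
    P.real {ω | lam < |∑ n ∈ s, w n * ((h n ω ^ 2 + l n ω ^ 2) / 2 - 1)|}
      ≤ 2 * exp (-t * lam + 2 * t ^ 2 * ∑ n ∈ s, w n ^ 2) := by
  have hbound := measureReal_lt_abs_sum_mul_sq_sub_one_le hindep (Sum.forall.2 ⟨hh, hl⟩)
    (Sum.forall.2 ⟨hh_law, hl_law⟩) ht (s := s.disjSum s) (c := Sum.elim w w)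
    (Sum.forall.2 ⟨fun n hn => hw n (inl_mem_disjSum.1 hn),
      fun n hn => hw n (inr_mem_disjSum.1 hn)⟩) lam
  have hterm (a x y : ℝ) :
      a * (x ^ 2 - 1) / 2 + a * (y ^ 2 - 1) / 2 = a * ((x ^ 2 + y ^ 2) / 2 - 1) := by
    ring
  simp only [sum_disjSum, Sum.elim_inl, Sum.elim_inr, ← sum_add_distrib, hterm, ← two_mul,
    ← mul_assoc, mul_comm (t ^ 2) 2] at hbound
  exact hbound


lemma rpow_neg_sub_rpow_neg_add_one_ge {β x : ℝ} (hβ0 : 0 < β) (hβ1 : β ≤ 1) (hx : 0 < x) :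
    β * (x + 1) ^ (-(β + 1)) ≤ x ^ (-β) - (x + 1) ^ (-β) := by
  set y := x + 1
  have hy : 0 < y := by positivity
  have hxy : 0 < x / y := by positivity
  -- Bernoulli: `(x / y) ^ β = (1 - 1 / y) ^ β ≤ 1 - β / y`
  have hbern : (x / y) ^ β ≤ 1 - β / y := by
    have h := rpow_one_add_le_one_add_mul_self (s := -(1 / y)) (p := β)
      (by rw [neg_le_neg_iff, div_le_one hy]; linarith) hβ0.le hβ1
    rwa [show 1 + -(1 / y) = x / y by field_simp; ring, mul_neg, ← sub_eq_add_neg,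
      mul_one_div] at h
  have hinv : 1 + β / y ≤ ((x / y) ^ β)⁻¹ := by
    rw [inv_eq_one_div, le_div_iff₀ (rpow_pos_of_pos hxy β)]
    nlinarith [div_pos hβ0 hy]
  calc β * y ^ (-(β + 1)) = (1 + β / y) * y ^ (-β) - y ^ (-β) := by
        rw [neg_add, rpow_add hy, rpow_neg_one]; ring
    _ ≤ ((x / y) ^ β)⁻¹ * y ^ (-β) - y ^ (-β) := by gcongr
    _ = x ^ (-β) - y ^ (-β) := by
        rw [← rpow_neg hxy.le, ← mul_rpow hxy.le hy.le, div_mul_cancel₀ _ hy.ne']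

lemma sum_Icc_rpow_neg_le {β : ℝ} (hβ0 : 0 < β) (hβ1 : β ≤ 1) {M : ℤ} (hM : 0 < M) (N : ℤ) :
    ∑ m ∈ Icc (M + 1) N, (m : ℝ) ^ (-(β + 1)) ≤ (M : ℝ) ^ (-β) / β := by
  obtain hNM | hMN := lt_or_ge N M
  · rw [Icc_eq_empty (by omega), sum_empty]
    positivity
  suffices htele : ∀ N ≥ M,
      ∑ m ∈ Icc (M + 1) N, (m : ℝ) ^ (-(β + 1)) ≤ ((M : ℝ) ^ (-β) - (N : ℝ) ^ (-β)) / β by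
    refine (htele N hMN).trans (div_le_div_of_nonneg_right ?_ hβ0.le)
    have : (0 : ℝ) ≤ (N : ℝ) ^ (-β) := rpow_nonneg (by exact_mod_cast hM.le.trans hMN) _
    linarith
  refine Int.leInduction (by simp) (fun N hMN ih => ?_)
  have hN : (0 : ℝ) < N := by exact_mod_cast hM.trans_le hMN
  have hstep := rpow_neg_sub_rpow_neg_add_one_ge hβ0 hβ1 hN
  rw [le_div_iff₀ hβ0] at ih
  rw [← insert_Icc_right_eq_Icc_add_one (by omega), sum_insert (by simp), Int.cast_add,
    Int.cast_one, le_div_iff₀ hβ0, add_mul]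
  linarith

noncomputable def intShell (M N : ℤ) : Finset ℤ := (Icc (-N) N).filter (fun n => M < |n|)

lemma sum_intShell_abs {R : Type*} [AddCommMonoid R] {M : ℤ} (hM : 0 ≤ M) (N : ℤ) (g : ℤ → R) :
    ∑ n ∈ intShell M N, g |n| = 2 • ∑ m ∈ Icc (M + 1) N, g m := by
  have hsplit : intShell M N = Icc (M + 1) N ∪ Icc (-N) (-(M + 1)) := by
    ext n
    simp only [intShell, mem_filter, mem_Icc, mem_union, lt_abs]
    omega
  have hdisj : Disjoint (Icc (M + 1) N) (Icc (-N) (-(M + 1))) :=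
    disjoint_left.2 fun n h₁ h₂ => by simp only [mem_Icc] at h₁ h₂; omega
  have hneg : ∑ n ∈ Icc (-N) (-(M + 1)), g |n| = ∑ m ∈ Icc (M + 1) N, g m :=
    sum_nbij' (fun n => -n) (fun m => -m) (fun n hn => by simp only [mem_Icc] at hn ⊢; omega)
      (fun m hm => by simp only [mem_Icc] at hm ⊢; omega) (fun _ _ => neg_neg _)
      (fun _ _ => neg_neg _) (fun n hn => by simp only [mem_Icc] at hn; rw [abs_of_neg (by omega)])
  rw [hsplit, sum_union hdisj, hneg, two_nsmul]
  congr 1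
  exact sum_congr rfl fun m hm => by simp only [mem_Icc] at hm; rw [abs_of_pos (by omega)]

lemma sum_intShell_inv_one_add_abs_rpow_sq_le {α : ℝ} (hα₁ : 1 / 2 < α) (hα₂ : α ≤ 1) {M : ℤ}
    (hM : 0 < M) (N : ℤ) :
    ∑ n ∈ intShell M N, ((1 + |(n : ℝ)| ^ α)⁻¹) ^ 2
      ≤ 2 / (2 * α - 1) * (M : ℝ) ^ (1 - 2 * α) := by
  have hterm : ∀ n ∈ intShell M N,
      ((1 + |(n : ℝ)| ^ α)⁻¹) ^ 2 ≤ ((|n| : ℤ) : ℝ) ^ (-(2 * α - 1 + 1)) := by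
    intro n hn
    have hn0 : (0 : ℝ) < |(n : ℝ)| := by
      simp only [intShell, mem_filter] at hn
      exact_mod_cast hM.trans hn.2
    rw [Int.cast_abs, show -(2 * α - 1 + 1) = -α + -α by ring, rpow_add hn0, rpow_neg hn0.le, ← sq]
    gcongr
    linarith
  calc ∑ n ∈ intShell M N, ((1 + |(n : ℝ)| ^ α)⁻¹) ^ 2
      ≤ ∑ n ∈ intShell M N, ((|n| : ℤ) : ℝ) ^ (-(2 * α - 1 + 1)) := sum_le_sum hterm
    _ = 2 * ∑ m ∈ Icc (M + 1) N, (m : ℝ) ^ (-(2 * α - 1 + 1)) := by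
      rw [sum_intShell_abs hM.le N (fun m => (m : ℝ) ^ (-(2 * α - 1 + 1))), nsmul_eq_mul]
      norm_num
    _ ≤ 2 * ((M : ℝ) ^ (-(2 * α - 1)) / (2 * α - 1)) := by
      gcongr
      exact sum_Icc_rpow_neg_le (by linarith) (by linarith) hM N
    _ = 2 / (2 * α - 1) * (M : ℝ) ^ (1 - 2 * α) := by ring_nf

lemma bernstein_regimes_of_chernoff {p b v lam : ℝ} (hb : 0 < b) (hv : 0 < v) (hlam : 0 < lam)
    (hp : ∀ t, 0 < t → t ≤ b → p ≤ 2 * exp (-t * lam + t ^ 2 * v)) :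
    (2 * b * v ≤ lam → p ≤ 2 * exp (-(b * lam / 2))) ∧
      (lam ≤ 2 * b * v → p ≤ 2 * exp (-(lam ^ 2 / (4 * v)))) := by
  refine ⟨fun hlarge => (hp b hb le_rfl).trans ?_, fun hsmall => ?_⟩
  · gcongr
    nlinarith [mul_le_mul_of_nonneg_left hlarge hb.le]
  · have ht : lam / (2 * v) ≤ b := by rw [div_le_iff₀ (by positivity)]; linarith
    refine (hp _ (by positivity) ht).trans_eq ?_
    congr 2
    field_simp
    ring

lemma measureReal_lt_abs_sum_intShell_le {Ω : Type*} [MeasurableSpace Ω] {P : Measure Ω}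
    {h l : ℤ → Ω → ℝ} (hh : ∀ n, Measurable (h n)) (hl : ∀ n, Measurable (l n))
    (hindep : iIndepFun (Sum.elim h l) P) (hh_law : ∀ n, P.map (h n) = gaussianReal 0 1)
    (hl_law : ∀ n, P.map (l n) = gaussianReal 0 1) {α : ℝ} (hα₁ : 1 / 2 < α) (hα₂ : α ≤ 1)
    {M : ℤ} (hM : 0 < M) (N : ℤ) {t : ℝ} (ht : 0 ≤ t) (htM : t ≤ (M : ℝ) ^ α / 2) (lam : ℝ) :
    P.real {ω | lam < |∑ n ∈ intShell M N,
        (1 + |(n : ℝ)| ^ α)⁻¹ * ((h n ω ^ 2 + l n ω ^ 2) / 2 - 1)|}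
      ≤ 2 * exp (-t * lam + t ^ 2 * (4 / (2 * α - 1) * (M : ℝ) ^ (1 - 2 * α))) := by
  have hweight : ∀ n ∈ intShell M N, t * |(1 + |(n : ℝ)| ^ α)⁻¹| ≤ 1 / 2 := by
    intro n hn
    have hMn : (M : ℝ) ≤ |(n : ℝ)| := by
      simp only [intShell, mem_filter] at hn
      exact_mod_cast hn.2.le
    have hw : (1 + |(n : ℝ)| ^ α)⁻¹ ≤ ((M : ℝ) ^ α)⁻¹ := by
      gcongr
      linarith [rpow_le_rpow (by exact_mod_cast hM.le) hMn (by linarith : 0 ≤ α)]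
    rw [abs_of_pos (by positivity)]
    calc t * (1 + |(n : ℝ)| ^ α)⁻¹ ≤ (M : ℝ) ^ α / 2 * ((M : ℝ) ^ α)⁻¹ := by gcongr
      _ = 1 / 2 := by field_simp
  refine (measureReal_lt_abs_sum_mul_half_sq_add_sq_sub_one_le hh hl hindep hh_law hl_law ht
    hweight lam).trans ?_
  have hvar : 2 * t ^ 2 * ∑ n ∈ intShell M N, ((1 + |(n : ℝ)| ^ α)⁻¹) ^ 2
      ≤ t ^ 2 * (4 / (2 * α - 1) * (M : ℝ) ^ (1 - 2 * α)) := by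
    rw [show t ^ 2 * (4 / (2 * α - 1) * (M : ℝ) ^ (1 - 2 * α))
      = 2 * t ^ 2 * (2 / (2 * α - 1) * (M : ℝ) ^ (1 - 2 * α)) by ring]
    gcongr
    exact sum_intShell_inv_one_add_abs_rpow_sq_le hα₁ hα₂ hM N
  gcongr 2 * exp (-t * lam + ?_)

/-- Large deviation estimate for the renormalized mass differences `b_N - b_M`. -/
theorem large_deviation_mass (α : ℝ) (hα₁ : 1 / 2 < α) (hα₂ : α ≤ 1) :
    ∃ C > 0, ∃ c > 0, ∃ c₀ > 0, ∃ M₀ : ℤ, 1 ≤ M₀ ∧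
      ∀ (Ω : Type) [MeasurableSpace Ω] (P : Measure Ω) [IsProbabilityMeasure P]
        (h l : ℤ → Ω → ℝ),
        (∀ n, Measurable (h n)) → (∀ n, Measurable (l n)) →
        iIndepFun (Sum.elim h l) P →
        (∀ n, Measure.map (h n) P = gaussianReal 0 1) →
        (∀ n, Measure.map (l n) P = gaussianReal 0 1) →
        ∀ M N : ℤ, M₀ ≤ M → M < N →
        ∀ lam : ℝ, 0 < lam →
          (c₀ * (M : ℝ) ^ (1 - α) ≤ lam →
            P {ω | lam < |∑ n ∈ (Finset.Icc (-N) N).filter (fun n => M < |n|),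
                (1 + |(n : ℝ)| ^ α)⁻¹ * ((h n ω ^ 2 + l n ω ^ 2) / 2 - 1)|}
              ≤ ENNReal.ofReal (C * Real.exp (-c * lam * (M : ℝ) ^ α))) ∧
          (lam ≤ c₀ * (M : ℝ) ^ (1 - α) →
            P {ω | lam < |∑ n ∈ (Finset.Icc (-N) N).filter (fun n => M < |n|),
                (1 + |(n : ℝ)| ^ α)⁻¹ * ((h n ω ^ 2 + l n ω ^ 2) / 2 - 1)|}
              ≤ ENNReal.ofReal (C * Real.exp (-c * lam ^ 2 * (M : ℝ) ^ (2 * α - 1)))) := by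
  have hβ : 0 < 2 * α - 1 := by linarith
  refine ⟨2, two_pos, (2 * α - 1) / 16, by positivity, 4 / (2 * α - 1), by positivity, 1, le_rfl,
    fun Ω _ P _ h l hh hl hindep hh_law hl_law M N hM _ lam hlam => ?_⟩
  have hM0 : (0 : ℝ) < M := by exact_mod_cast one_pos.trans_le hM
  obtain ⟨hlarge, hsmall⟩ := bernstein_regimes_of_chernoff (by positivity) (by positivity) hlam
    fun t ht htM => measureReal_lt_abs_sum_intShell_le hh hl hindep hh_law hl_law hα₁ hα₂
      (M := M) (by omega) N ht.le htM lam
  have hthreshold : 2 * ((M : ℝ) ^ α / 2) * (4 / (2 * α - 1) * (M : ℝ) ^ (1 - 2 * α))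
      = 4 / (2 * α - 1) * (M : ℝ) ^ (1 - α) := by
    rw [show 1 - α = α + (1 - 2 * α) by ring, rpow_add hM0]; ring
  have hrate : lam ^ 2 / (4 * (4 / (2 * α - 1) * (M : ℝ) ^ (1 - 2 * α)))
      = (2 * α - 1) / 16 * lam ^ 2 * (M : ℝ) ^ (2 * α - 1) := by
    rw [show 1 - 2 * α = -(2 * α - 1) by ring, rpow_neg hM0.le]
    field_simp
    norm_num
  refine ⟨fun hreg => (ofReal_measureReal).ge.trans
      (ENNReal.ofReal_le_ofReal ((hlarge (hthreshold ▸ hreg)).trans ?_)),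
    fun hreg => (ofReal_measureReal).ge.trans
      (ENNReal.ofReal_le_ofReal ((hsmall (hthreshold ▸ hreg)).trans_eq ?_))⟩
  · have : (2 * α - 1) / 16 ≤ 1 / 4 := by linarith
    gcongr
    nlinarith [mul_le_mul_of_nonneg_right this (mul_pos hlam (rpow_pos_of_pos hM0 α)).le]
  · rw [hrate]; ring_nf
end

section
/- Let 1 < α < 2. For all real numbers x, y with x·y ≥ 0 and (x,y) ≠ (0,0), one has | |x|^{α−1} − |y|^{α−1} | ≥ (α−1) · |x − y| · max(|x|,|y|)^{α−2}. -/
/-!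
Put `p = α - 1 ∈ (0, 1)`. Since `x` and `y` have the same sign, `|x - y| = ||x| - |y||`, so it
suffices to treat `0 ≤ b ≤ a`. There Bernoulli's inequality `t ^ p ≤ 1 + p (t - 1)` for
`t = b / a ∈ [0, 1]`, multiplied by `a ^ p`, is exactly `p (a - b) a ^ (p - 1) ≤ a ^ p - b ^ p`:
the concave function `t ↦ t ^ p` lies below its tangent line at `a`.
-/

open Real

lemma abs_sub_eq_abs_abs_sub_abs_of_mul_nonneg {R : Type*} [Ring R] [LinearOrder R]
    [IsStrictOrderedRing R] {x y : R} (h : 0 ≤ x * y) : |x - y| = |(|x| - |y|)| := by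
  rcases mul_nonneg_iff.mp h with ⟨hx, hy⟩ | ⟨hx, hy⟩
  · rw [abs_of_nonneg hx, abs_of_nonneg hy]
  · rw [abs_of_nonpos hx, abs_of_nonpos hy, neg_sub_neg, abs_sub_comm]

lemma Real.mul_sub_mul_rpow_sub_one_le_rpow_sub_rpow {p a b : ℝ} (hp₀ : 0 ≤ p) (hp₁ : p ≤ 1)
    (hb : 0 ≤ b) (hba : b ≤ a) : p * (a - b) * a ^ (p - 1) ≤ a ^ p - b ^ p := by
  obtain rfl | hba := hba.eq_or_lt
  · simp
  have ha : 0 < a := hb.trans_lt hba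
  have bernoulli : (b / a) ^ p ≤ 1 + p * (b / a - 1) := by
    simpa using rpow_one_add_le_one_add_mul_self (s := b / a - 1)
      (by linarith [div_nonneg hb ha.le]) hp₀ hp₁
  calc p * (a - b) * a ^ (p - 1) = a ^ p * (1 - (1 + p * (b / a - 1))) := by
        rw [rpow_sub_one ha.ne']
        field_simp
        ring
    _ ≤ a ^ p * (1 - (b / a) ^ p) := by gcongr
    _ = a ^ p - b ^ p := by
        rw [div_rpow hb ha.le, mul_sub, mul_div_cancel₀ _ (rpow_pos_of_pos ha p).ne', mul_one]

lemma Real.mul_abs_sub_mul_max_rpow_sub_one_le_abs_rpow_sub_rpow {p a b : ℝ} (hp₀ : 0 ≤ p)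
    (hp₁ : p ≤ 1) (ha : 0 ≤ a) (hb : 0 ≤ b) :
    p * |a - b| * max a b ^ (p - 1) ≤ |a ^ p - b ^ p| := by
  rcases le_total b a with hba | hab
  · rw [max_eq_left hba, abs_of_nonneg (sub_nonneg.mpr hba)]
    exact (mul_sub_mul_rpow_sub_one_le_rpow_sub_rpow hp₀ hp₁ hb hba).trans (le_abs_self _)
  · rw [max_eq_right hab, abs_sub_comm a, abs_sub_comm (a ^ p), abs_of_nonneg (sub_nonneg.mpr hab)]
    exact (mul_sub_mul_rpow_sub_one_le_rpow_sub_rpow hp₀ hp₁ ha hab).trans (le_abs_self _)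

theorem rpow_diff_lower_bound_general (α : ℝ) (hα₁ : 1 < α) (hα₂ : α < 2) (x y : ℝ)
    (hxy : 0 ≤ x * y) :
    (α - 1) * |x - y| * (max |x| |y|) ^ (α - 2) ≤ |(|x| ^ (α - 1) - |y| ^ (α - 1))| := by
  have hexp : α - 2 = (α - 1) - 1 := by ring
  rw [abs_sub_eq_abs_abs_sub_abs_of_mul_nonneg hxy, hexp]
  exact mul_abs_sub_mul_max_rpow_sub_one_le_abs_rpow_sub_rpow (by linarith) (by linarith)
    (abs_nonneg x) (abs_nonneg y)

/-- Lower bound on differences of powers `|x|^(α-1) - |y|^(α-1)` for `x·y ≥ 0`. -/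
theorem rpow_diff_lower_bound (α : ℝ) (hα₁ : 1 < α) (hα₂ : α < 2) (x y : ℝ)
    (hxy : 0 ≤ x * y) (hne : (x, y) ≠ (0, 0)) :
    (α - 1) * |x - y| * (max |x| |y|) ^ (α - 2) ≤ |(|x| ^ (α - 1) - |y| ^ (α - 1))| :=
  rpow_diff_lower_bound_general α hα₁ hα₂ x y hxy
end
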